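/- arXiv:2111.00633 — 8 statements merged into one kernel-verified Lean document; each statement's English description precedes it below -/
import Mathlib

section
/- Let C = (S, P, μ) be a Markov chain with finite state space S. For any sequence of L states T = (s_0, s_1, …, s_{L−1}) ∈ S^L with L > |S|, there exists a sequence of L′ states T′ = (s′_0, s′_1, …, s′_{L′−1}) ∈ S^{L′} with s′_{L′−1} = s_{L−1}, L′ ≤ |S|, and p(T, C) ≤ p(T′, C). -/
/-! A sequence longer than `|S|` visits some state twice, at times `i < i + d`. Cutting out the
loop between these two visits keeps every remaining transition and the final state, and only
removes the factor `∏_{k<d} P(s_{i+k+1} ∣ s_{i+k}) ≤ 1` from the probability. Iterating until the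
sequence has at most `|S|` states gives the claim. -/

open Finset

/-- The probability of a sequence of `L` states `T = (T 0, …, T (L-1))` in the Markov chain
with initial distribution `μ` and transition operator `P`:
`p(T, C) = μ(s₀) · ∏_{h=0}^{L-2} P(s_{h+1} ∣ s_h)`. -/
noncomputable def seqProb {S : Type} (μ : S → ℝ) (P : S → S → ℝ) (L : ℕ) (T : ℕ → S) : ℝ :=
  μ (T 0) * ∏ h ∈ Finset.range (L - 1), P (T h) (T (h + 1))

section DropCycle

variable {α : Type*}

def dropCycle (T : ℕ → α) (i d : ℕ) : ℕ → α :=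
  fun k => if k < i then T k else T (k + d)

theorem dropCycle_add (T : ℕ → α) (i d k : ℕ) : dropCycle T i d (i + k) = T (i + k + d) := by
  simp [dropCycle]

theorem dropCycle_of_le {T : ℕ → α} {i d k : ℕ} (hT : T (i + d) = T i) (hk : k ≤ i) :
    dropCycle T i d k = T k := by
  rcases hk.lt_or_eq with hk | rfl
  · simp [dropCycle, hk]
  · simp [dropCycle, hT]

theorem exists_apply_add_eq_apply_le_card [Fintype α] (T : ℕ → α) :
    ∃ i d, 0 < d ∧ i + d ≤ Fintype.card α ∧ T (i + d) = T i := by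
  obtain ⟨a, ha, b, hb, hab, hT⟩ := exists_ne_map_eq_of_card_lt_of_maps_to
    (s := range (Fintype.card α + 1)) (t := (univ : Finset α)) (f := T) (by simp)
    (fun _ _ ↦ mem_coe.2 (mem_univ _))
  simp only [mem_range] at ha hb
  rcases hab.lt_or_gt with h | h
  · exact ⟨a, b - a, by omega, by omega, by rw [Nat.add_sub_cancel' h.le, hT]⟩
  · exact ⟨b, a - b, by omega, by omega, by rw [Nat.add_sub_cancel' h.le, hT]⟩

end DropCycle

section SeqProb

variable {S : Type} (μ : S → ℝ) (P : S → S → ℝ)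

theorem seqProb_eq_seqProb_dropCycle_mul {T : ℕ → S} {i d : ℕ} (hT : T (i + d) = T i) (m : ℕ) :
    seqProb μ P (i + d + m + 1) T =
      seqProb μ P (i + m + 1) (dropCycle T i d) * ∏ k ∈ range d, P (T (i + k)) (T (i + k + 1)) := by
  have head : ∀ h ∈ range i,
      P (dropCycle T i d h) (dropCycle T i d (h + 1)) = P (T h) (T (h + 1)) := fun h hh ↦ by
    rw [mem_range] at hh
    rw [dropCycle_of_le hT hh.le, dropCycle_of_le hT hh]
  have tail : ∀ k ∈ range m, P (dropCycle T i d (i + k)) (dropCycle T i d (i + k + 1)) =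
      P (T (i + d + k)) (T (i + d + k + 1)) := fun k _ ↦ by
    rw [add_assoc i k 1, dropCycle_add, dropCycle_add]
    congr 2 <;> ring
  simp only [seqProb, Nat.add_sub_cancel, prod_range_add, dropCycle_of_le hT (Nat.zero_le i),
    prod_congr rfl head, prod_congr rfl tail]
  ring

variable {μ P}

theorem seqProb_nonneg (hμ0 : ∀ s, 0 ≤ μ s) (hP0 : ∀ s s', 0 ≤ P s s') (L : ℕ) (T : ℕ → S) :
    0 ≤ seqProb μ P L T :=
  mul_nonneg (hμ0 _) (prod_nonneg fun _ _ ↦ hP0 _ _)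

theorem seqProb_le_seqProb_dropCycle (hμ0 : ∀ s, 0 ≤ μ s) (hP0 : ∀ s s', 0 ≤ P s s')
    (hP1 : ∀ s s', P s s' ≤ 1) {T : ℕ → S} {i d : ℕ} (hT : T (i + d) = T i) (m : ℕ) :
    seqProb μ P (i + d + m + 1) T ≤ seqProb μ P (i + m + 1) (dropCycle T i d) := by
  rw [seqProb_eq_seqProb_dropCycle_mul μ P hT]
  exact mul_le_of_le_one_right (seqProb_nonneg hμ0 hP0 _ _)
    (prod_le_one (fun _ _ ↦ hP0 _ _) fun _ _ ↦ hP1 _ _)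

theorem exists_shorter_seqProb_le [Fintype S] (hμ0 : ∀ s, 0 ≤ μ s) (hP0 : ∀ s s', 0 ≤ P s s')
    (hP1 : ∀ s s', P s s' ≤ 1) {L : ℕ} (hL : Fintype.card S < L) (T : ℕ → S) :
    ∃ L'' < L, 1 ≤ L'' ∧ ∃ T'' : ℕ → S,
      T'' (L'' - 1) = T (L - 1) ∧ seqProb μ P L T ≤ seqProb μ P L'' T'' := by
  obtain ⟨i, d, hd, hid, hT⟩ := exists_apply_add_eq_apply_le_card T
  obtain ⟨m, rfl⟩ : ∃ m, L = i + d + m + 1 := ⟨L - (i + d) - 1, by omega⟩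
  refine ⟨i + m + 1, by omega, by omega, dropCycle T i d, ?_,
    seqProb_le_seqProb_dropCycle hμ0 hP0 hP1 hT m⟩
  rw [Nat.add_sub_cancel, Nat.add_sub_cancel, dropCycle_add]
  congr 1
  ring

end SeqProb

theorem stmt0_general {S : Type} [Fintype S]
    (μ : S → ℝ) (P : S → S → ℝ)
    (hμ0 : ∀ s, 0 ≤ μ s)
    (hP0 : ∀ s s', 0 ≤ P s s') (hP1 : ∀ s, ∑ s', P s s' = 1)
    (L : ℕ) (hL : Fintype.card S < L) (T : ℕ → S) :
    ∃ (L' : ℕ) (T' : ℕ → S),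
      1 ≤ L' ∧ L' ≤ Fintype.card S ∧ T' (L' - 1) = T (L - 1) ∧
      seqProb μ P L T ≤ seqProb μ P L' T' := by
  have hP_le_one : ∀ s s', P s s' ≤ 1 := fun s s' ↦
    hP1 s ▸ single_le_sum (fun t _ ↦ hP0 s t) (mem_univ s')
  induction L using Nat.strong_induction_on generalizing T with
  | _ L ih =>
    obtain ⟨L'', hL''L, hL''pos, T'', hend, hle⟩ :=
      exists_shorter_seqProb_le hμ0 hP0 hP_le_one hL T
    by_cases hshort : L'' ≤ Fintype.card S
    · exact ⟨L'', T'', hL''pos, hshort, hend, hle⟩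
    · obtain ⟨L', T', hL'pos, hL'card, hend', hle'⟩ := ih L'' hL''L (by omega) T''
      exact ⟨L', T', hL'pos, hL'card, hend'.trans hend, hle.trans hle'⟩

/-- For any sequence of `L > |S|` states there is a sequence of at most `|S|` states, with the
same final state, whose probability in the Markov chain is at least as large. -/
theorem stmt0 {S : Type} [Fintype S]
    (μ : S → ℝ) (P : S → S → ℝ)
    (hμ0 : ∀ s, 0 ≤ μ s) (hμ1 : ∑ s, μ s = 1)
    (hP0 : ∀ s s', 0 ≤ P s s') (hP1 : ∀ s, ∑ s', P s s' = 1)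
    (L : ℕ) (hL : Fintype.card S < L) (T : ℕ → S) :
    ∃ (L' : ℕ) (T' : ℕ → S),
      1 ≤ L' ∧ L' ≤ Fintype.card S ∧ T' (L' - 1) = T (L - 1) ∧
      seqProb μ P L T ≤ seqProb μ P L' T' :=
  stmt0_general μ P hμ0 hP0 hP1 L hL T
end

section
/- Let C = (S, P, μ) be a Markov chain with finite state space S. For any state s ∈ S, Σ_{h=0}^{4|S|−1} p_h(s, C) ≤ 4 · |S|^{4|S|} · Σ_{h=0}^{|S|−1} p_h(s, C). -/
/-!
Every path of any length ending in `s` can be shortened to a path of length `< |S|` ending in `s`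
by cutting out cycles, and since transition probabilities are at most `1` this never decreases
its probability. So each of the `|S|^L` summands of `p_L(s)` is at most
`W = ∑_{h < |S|} p_h(s)`, whence `p_L(s) ≤ |S|^L W`, and summing over `L < 4|S|` gives the bound.
-/

open Finset

/-- `pReach μ P L s` is the probability `p_L(s, C)` of reaching `s` with exactly `L` steps in the
Markov chain `C = (S, P, μ)`: the sum over all `(s_0, …, s_{L-1}) ∈ S^L` of the probability of the
sequence `(s_0, …, s_{L-1}, s)`. -/
noncomputable def pReach {S : Type} [Fintype S] (μ : S → ℝ) (P : S → S → ℝ)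
    (L : ℕ) (s : S) : ℝ :=
  ∑ T : Fin L → S,
    (fun f : ℕ → S => μ (f 0) * ∏ h ∈ Finset.range L, P (f h) (f (h + 1)))
      (fun n => if h : n < L then T ⟨n, h⟩ else s)

section PathWeight

variable {S : Type} (μ : S → ℝ) (P : S → S → ℝ)

noncomputable def pathWeight (L : ℕ) (f : ℕ → S) : ℝ :=
  μ (f 0) * ∏ h ∈ range L, P (f h) (f (h + 1))

variable {μ P}

theorem pathWeight_nonneg (hμ0 : ∀ s, 0 ≤ μ s) (hP0 : ∀ s s', 0 ≤ P s s') (L : ℕ) (f : ℕ → S) :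
    0 ≤ pathWeight μ P L f :=
  mul_nonneg (hμ0 _) (prod_nonneg fun _ _ => hP0 _ _)

theorem pathWeight_congr {L : ℕ} {f g : ℕ → S} (hfg : ∀ m ≤ L, f m = g m) :
    pathWeight μ P L f = pathWeight μ P L g := by
  unfold pathWeight
  rw [hfg 0 (Nat.zero_le L)]
  congr 1
  refine prod_congr rfl fun h hh => ?_
  rw [mem_range] at hh
  rw [hfg h hh.le, hfg (h + 1) hh]

theorem le_one_of_sum_eq_one [Fintype S] (hP0 : ∀ s s', 0 ≤ P s s')
    (hP1 : ∀ s, ∑ s', P s s' = 1) (a b : S) : P a b ≤ 1 :=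
  hP1 a ▸ single_le_sum (fun s' _ => hP0 a s') (mem_univ b)

theorem exists_pathWeight_le_of_cycle (hμ0 : ∀ s, 0 ≤ μ s)
    (hP0 : ∀ s s', 0 ≤ P s s') (hP_le : ∀ s s', P s s' ≤ 1)
    {i d : ℕ} (r : ℕ) {f : ℕ → S} (hcycle : f i = f (i + d)) :
    ∃ g : ℕ → S, g (i + r) = f (i + d + r) ∧
      pathWeight μ P (i + d + r) f ≤ pathWeight μ P (i + r) g := by
  set g : ℕ → S := fun m => if m ≤ i then f m else f (m + d)
  have hg_le : ∀ m ≤ i, g m = f m := fun m hm => if_pos hm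
  have hg_ge : ∀ m, i ≤ m → g m = f (m + d) := fun m hm => by
    rcases hm.eq_or_lt with rfl | hm
    · exact (if_pos le_rfl).trans hcycle
    · exact if_neg hm.not_ge
  refine ⟨g, by rw [hg_ge _ (Nat.le_add_right i r), add_right_comm], ?_⟩
  set A := ∏ x ∈ range i, P (f x) (f (x + 1))
  set B := ∏ x ∈ range d, P (f (i + x)) (f (i + x + 1))
  set C := ∏ x ∈ range r, P (f (i + d + x)) (f (i + d + x + 1))
  have hf : pathWeight μ P (i + d + r) f = μ (f 0) * (A * B * C) := by
    rw [pathWeight, prod_range_add, prod_range_add]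
  have hg : pathWeight μ P (i + r) g = μ (f 0) * (A * C) := by
    rw [pathWeight, prod_range_add, hg_le 0 (Nat.zero_le i)]
    congr 2
    · refine prod_congr rfl fun x hx => ?_
      have hx : x < i := mem_range.mp hx
      rw [hg_le x hx.le, hg_le (x + 1) hx]
    · refine prod_congr rfl fun x _ => ?_
      rw [hg_ge _ (Nat.le_add_right i x), hg_ge _ (by omega), add_right_comm i x d,
        add_right_comm (i + x) 1 d, add_right_comm i x d]
  have hA : 0 ≤ A := prod_nonneg fun _ _ => hP0 _ _
  have hB : B ≤ 1 := prod_le_one (fun _ _ => hP0 _ _) fun _ _ => hP_le _ _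
  have hC : 0 ≤ C := prod_nonneg fun _ _ => hP0 _ _
  rw [hf, hg, mul_right_comm A B C]
  exact mul_le_mul_of_nonneg_left (mul_le_of_le_one_right (mul_nonneg hA hC) hB) (hμ0 _)

theorem exists_lt_le_map_eq_of_card_le [Fintype S] (f : ℕ → S) {L : ℕ}
    (hL : Fintype.card S ≤ L) : ∃ i j, i < j ∧ j ≤ L ∧ f i = f j := by
  obtain ⟨x, hx, y, hy, hne, hxy⟩ := exists_ne_map_eq_of_card_lt_of_maps_to
    (s := range (L + 1)) (t := (univ : Finset S)) (by simpa using Nat.lt_succ_of_le hL)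
    (f := f) (fun _ _ => mem_univ _)
  rw [mem_range] at hx hy
  rcases hne.lt_or_gt with h | h
  · exact ⟨x, y, h, by omega, hxy⟩
  · exact ⟨y, x, h, by omega, hxy.symm⟩

theorem pReach_eq_sum_pathWeight [Fintype S] (L : ℕ) (s : S) :
    pReach μ P L s =
      ∑ T : Fin L → S, pathWeight μ P L (fun n => if h : n < L then T ⟨n, h⟩ else s) :=
  rfl

theorem pReach_nonneg [Fintype S] (hμ0 : ∀ s, 0 ≤ μ s) (hP0 : ∀ s s', 0 ≤ P s s')
    (L : ℕ) (s : S) : 0 ≤ pReach μ P L s :=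
  (pReach_eq_sum_pathWeight L s).symm ▸ sum_nonneg fun _ _ => pathWeight_nonneg hμ0 hP0 _ _

theorem pathWeight_le_pReach [Fintype S] (hμ0 : ∀ s, 0 ≤ μ s) (hP0 : ∀ s s', 0 ≤ P s s')
    {L : ℕ} {s : S} {f : ℕ → S} (hf : f L = s) : pathWeight μ P L f ≤ pReach μ P L s := by
  rw [pReach_eq_sum_pathWeight]
  refine le_of_eq_of_le (pathWeight_congr fun m hm => ?_)
    (single_le_sum (fun _ _ => pathWeight_nonneg hμ0 hP0 _ _) (mem_univ fun k : Fin L => f k))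
  rcases hm.lt_or_eq with hm | rfl
  · simp [hm]
  · simp [hf]

theorem pathWeight_le_sum_pReach [Fintype S] (hμ0 : ∀ s, 0 ≤ μ s)
    (hP0 : ∀ s s', 0 ≤ P s s') (hP_le : ∀ s s', P s s' ≤ 1) {s : S} (L : ℕ) {f : ℕ → S}
    (hf : f L = s) :
    pathWeight μ P L f ≤ ∑ h ∈ range (Fintype.card S), pReach μ P h s := by
  induction L using Nat.strong_induction_on generalizing f with
  | _ L ih =>
    by_cases hL : L < Fintype.card S
    · exact (pathWeight_le_pReach hμ0 hP0 hf).trans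
        (single_le_sum (fun h _ => pReach_nonneg hμ0 hP0 h s) (mem_range.mpr hL))
    obtain ⟨i, j, hij, hjL, hcycle⟩ := exists_lt_le_map_eq_of_card_le f (not_lt.mp hL)
    obtain ⟨d, rfl⟩ := Nat.exists_eq_add_of_lt hij
    obtain ⟨r, rfl⟩ := Nat.exists_eq_add_of_le hjL
    obtain ⟨g, hg, hfg⟩ := exists_pathWeight_le_of_cycle (d := d + 1) hμ0 hP0 hP_le r hcycle
    exact hfg.trans (ih (i + r) (by omega) (hg.trans hf))

theorem pReach_le_card_pow_mul [Fintype S] (hμ0 : ∀ s, 0 ≤ μ s)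
    (hP0 : ∀ s s', 0 ≤ P s s') (hP_le : ∀ s s', P s s' ≤ 1) (L : ℕ) (s : S) :
    pReach μ P L s ≤
      (Fintype.card S : ℝ) ^ L * ∑ h ∈ range (Fintype.card S), pReach μ P h s := by
  rw [pReach_eq_sum_pathWeight]
  refine (sum_le_card_nsmul _ _ _ fun T _ =>
    pathWeight_le_sum_pReach hμ0 hP0 hP_le L (dif_neg (lt_irrefl L))).trans_eq ?_
  simp [nsmul_eq_mul]

end PathWeight

theorem stmt1_general {S : Type} [Fintype S]
    (μ : S → ℝ) (P : S → S → ℝ)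
    (hμ0 : ∀ s, 0 ≤ μ s)
    (hP0 : ∀ s s', 0 ≤ P s s') (hP1 : ∀ s, ∑ s', P s s' = 1)
    (s : S) :
    ∑ h ∈ Finset.range (4 * Fintype.card S), pReach μ P h s ≤
      4 * (Fintype.card S : ℝ) ^ (4 * Fintype.card S) *
        ∑ h ∈ Finset.range (Fintype.card S), pReach μ P h s := by
  have hP_le : ∀ a b, P a b ≤ 1 := le_one_of_sum_eq_one hP0 hP1
  set n := Fintype.card S
  set W := ∑ h ∈ range n, pReach μ P h s
  have hn_pos : 0 < n := Fintype.card_pos_iff.mpr ⟨s⟩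
  have hn : (1 : ℝ) ≤ n := by exact_mod_cast hn_pos
  have hW : 0 ≤ W := sum_nonneg fun h _ => pReach_nonneg hμ0 hP0 h s
  calc ∑ h ∈ range (4 * n), pReach μ P h s
      ≤ ∑ _h ∈ range (4 * n), (n : ℝ) ^ (4 * n - 1) * W := by
        refine sum_le_sum fun L hL => (pReach_le_card_pow_mul hμ0 hP0 hP_le L s).trans ?_
        exact mul_le_mul_of_nonneg_right
          (pow_le_pow_right₀ hn (Nat.le_pred_of_lt (mem_range.mp hL))) hW
    _ = 4 * ((n : ℝ) ^ (4 * n - 1) * n) * W := by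
        rw [sum_const, card_range, nsmul_eq_mul, Nat.cast_mul, Nat.cast_ofNat]
        ring
    _ = 4 * (n : ℝ) ^ (4 * n) * W := by
        rw [← pow_succ, Nat.sub_add_cancel (by omega)]

theorem stmt1 {S : Type} [Fintype S]
    (μ : S → ℝ) (P : S → S → ℝ)
    (hμ0 : ∀ s, 0 ≤ μ s) (hμ1 : ∑ s, μ s = 1)
    (hP0 : ∀ s s', 0 ≤ P s s') (hP1 : ∀ s, ∑ s', P s s' = 1)
    (s : S) :
    ∑ h ∈ Finset.range (4 * Fintype.card S), pReach μ P h s ≤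
      4 * (Fintype.card S : ℝ) ^ (4 * Fintype.card S) *
        ∑ h ∈ Finset.range (Fintype.card S), pReach μ P h s :=
  stmt1_general μ P hμ0 hP0 hP1 s
end

section
/- Let C = (S, P, μ) be a Markov chain with finite state space S. For any state s ∈ S and any integer L ≥ |S|, Σ_{h=0}^{2L} p_h(s, C) ≤ 4 · |S|^{4|S|} · Σ_{h=0}^{L−1} p_h(s, C). -/
open Finset

/-!
Let `V(N)` be the expected number of visits to `s` during the first `N` steps, `R(N)` the same
quantity for the chain started at `s`, and `F(N)` the probability of reaching `s` before time `N`.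
Splitting a path at its first visit to `s` gives `V(N) = ∑ᵢ fᵢ R(N - i)`, where `fᵢ` is the
probability of a first visit at time `i`. Hence `R` is subadditive, each block of `K` further steps
adds at most `F · R(K)` to `V`, and conversely `F(A) R(B) ≤ V(A + B - 1)`.

Moreover `F(N + 1)` is a nonnegative combination of visit counts of the chain killed at `s`, which
has one state fewer. Induction on the number of states then gives `V(mK) ≤ m^|S| V(|S| K)`, and
`K = ⌊L / |S|⌋`, `m = 4 |S|` yield the theorem since `(4n)^n ≤ 4 n^(4n)`. Killing makes the
chain substochastic, so everything is proved for substochastic matrices.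
-/

open Matrix

namespace MarkovChain

variable {S : Type*} [Fintype S]

structure IsSubstochastic (Q : Matrix S S ℝ) : Prop where
  nonneg : ∀ i j, 0 ≤ Q i j
  sum_row_le_one : ∀ i, ∑ j, Q i j ≤ 1

lemma vecMul_nonneg {M : Matrix S S ℝ} (hM : ∀ i j, 0 ≤ M i j) {v : S → ℝ}
    (hv : 0 ≤ v) : 0 ≤ v ᵥ* M :=
  fun j => sum_nonneg fun i _ => mul_nonneg (hv i) (hM i j)

lemma sum_apply_vecMul {T : Type*} [Fintype T] (M : Matrix S T ℝ) (v : S → ℝ) :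
    ∑ j, (v ᵥ* M) j = ∑ i, v i * ∑ j, M i j := by
  simp only [vecMul, dotProduct, mul_sum]
  exact sum_comm

namespace IsSubstochastic

variable {M N : Matrix S S ℝ}

lemma sum_apply_vecMul_le (hM : IsSubstochastic M) {v : S → ℝ} (hv : 0 ≤ v) :
    ∑ j, (v ᵥ* M) j ≤ ∑ i, v i := by
  rw [sum_apply_vecMul]
  exact sum_le_sum fun i _ => mul_le_of_le_one_right (hv i) (hM.sum_row_le_one i)

lemma mul (hM : IsSubstochastic M) (hN : IsSubstochastic N) : IsSubstochastic (M * N) where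
  nonneg i := vecMul_nonneg hN.nonneg (hM.nonneg i)
  sum_row_le_one i := (hN.sum_apply_vecMul_le (hM.nonneg i)).trans (hM.sum_row_le_one i)

variable [DecidableEq S]

lemma one : IsSubstochastic (1 : Matrix S S ℝ) where
  nonneg i j := by by_cases h : i = j <;> simp [one_apply, h]
  sum_row_le_one i := by simp [one_apply]

lemma pow (hM : IsSubstochastic M) (h : ℕ) : IsSubstochastic (M ^ h) := by
  induction h with
  | zero => exact one
  | succ h ih => rw [pow_succ]; exact ih.mul hM

end IsSubstochastic

lemma update_add_single {α : Type*} [DecidableEq α] (ν : α → ℝ) (s : α) :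
    Function.update ν s 0 + ν s • Pi.single s 1 = ν := by
  ext t
  by_cases h : t = s <;> simp [h]

variable [DecidableEq S] (Q : Matrix S S ℝ) (s : S)

def killedAt : Matrix {t // t ≠ s} {t // t ≠ s} ℝ := Q.submatrix (↑) (↑)

def visits (ν : S → ℝ) (N : ℕ) : ℝ := ∑ h ∈ range N, (ν ᵥ* Q ^ h) s

abbrev returns (N : ℕ) : ℝ := visits Q s (Pi.single s 1) N

/-- The probability that the chain started from `ν` visits `s` for the first time at time `i`. -/
def firstVisit (ν : S → ℝ) : ℕ → ℝ
  | 0 => ν s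
  | i + 1 =>
    ∑ a : {t // t ≠ s}, ((fun b : {t // t ≠ s} => ν b) ᵥ* killedAt Q s ^ i) a * Q a s

def hitting (ν : S → ℝ) (N : ℕ) : ℝ := ∑ i ∈ range N, firstVisit Q s ν i

variable {Q s}

lemma card_subtype_ne (s : S) : Fintype.card {t // t ≠ s} = Fintype.card S - 1 := by
  rw [Fintype.card_subtype_compl, Fintype.card_subtype_eq]

lemma IsSubstochastic.killedAt (hQ : IsSubstochastic Q) : IsSubstochastic (killedAt Q s) where
  nonneg a b := hQ.nonneg a b
  sum_row_le_one a := by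
    show ∑ b : {t // t ≠ s}, Q a b ≤ 1
    have := hQ.sum_row_le_one a
    rw [Fintype.sum_eq_add_sum_subtype_ne _ s] at this
    linarith [hQ.nonneg a s]

lemma vecMul_apply_eq_add_sum_ne (ν : S → ℝ) (j : S) :
    (ν ᵥ* Q) j = ν s * Q s j + ∑ a : {t // t ≠ s}, ν a * Q a j :=
  Fintype.sum_eq_add_sum_subtype_ne _ s

lemma restrict_vecMul {ν : S → ℝ} (hν : ν s = 0) :
    (fun a : {t // t ≠ s} => (ν ᵥ* Q) a) =
      (fun a : {t // t ≠ s} => ν a) ᵥ* killedAt Q s := by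
  funext a
  rw [vecMul_apply_eq_add_sum_ne, hν, zero_mul, zero_add]
  rfl

lemma vecMul_apply_eq_update_add (ν : S → ℝ) (M : Matrix S S ℝ) (j : S) :
    (ν ᵥ* M) j = (Function.update ν s 0 ᵥ* M) j + ν s * (Pi.single s 1 ᵥ* M) j := by
  conv_lhs => rw [← update_add_single ν s]
  rw [add_vecMul, smul_vecMul]
  rfl

lemma firstVisit_update_succ (ν : S → ℝ) (c : ℝ) (i : ℕ) :
    firstVisit Q s (Function.update ν s c) (i + 1) = firstVisit Q s ν (i + 1) := by
  have : (fun b : {t // t ≠ s} => Function.update ν s c b) = fun b : {t // t ≠ s} => ν b :=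
    funext fun b => Function.update_of_ne b.2 c ν
  simp only [firstVisit, this]

lemma vecMul_pow_apply_of_eq_zero {ν : S → ℝ} (hν : ν s = 0) (h : ℕ) :
    (ν ᵥ* Q ^ h) s =
      ∑ i ∈ range h, firstVisit Q s ν (i + 1) * (Pi.single s 1 ᵥ* Q ^ (h - 1 - i)) s := by
  induction h generalizing ν with
  | zero => simp [hν]
  | succ h ih =>
    -- after one step, the mass at `s` restarts the count and the rest stays off `s`
    set w := ν ᵥ* Q
    have hfirst : w s = firstVisit Q s ν 1 := by
      simp only [w, firstVisit, pow_zero, vecMul_one]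
      rw [vecMul_apply_eq_add_sum_ne, hν, zero_mul, zero_add]
    have hnext (i : ℕ) :
        firstVisit Q s (Function.update w s 0) (i + 1) = firstVisit Q s ν (i + 2) := by
      rw [firstVisit_update_succ]
      simp only [firstVisit, w, restrict_vecMul hν, vecMul_vecMul, ← pow_succ']
    calc (ν ᵥ* Q ^ (h + 1)) s
        = (Function.update w s 0 ᵥ* Q ^ h) s + w s * (Pi.single s 1 ᵥ* Q ^ h) s := by
          rw [pow_succ', ← vecMul_vecMul, vecMul_apply_eq_update_add]
      _ = _ := by
          rw [ih (Function.update_self s 0 w), sum_range_succ' _ h, hfirst]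
          simp only [hnext, Nat.add_sub_cancel, Nat.sub_zero]
          congr 2 with i
          rw [Nat.sub_sub, Nat.add_comm 1 i]

lemma vecMul_pow_apply_eq_sum (ν : S → ℝ) (h : ℕ) :
    (ν ᵥ* Q ^ h) s =
      ∑ i ∈ range (h + 1), firstVisit Q s ν i * (Pi.single s 1 ᵥ* Q ^ (h - i)) s := by
  rw [vecMul_apply_eq_update_add (s := s),
    vecMul_pow_apply_of_eq_zero (Function.update_self s 0 ν), sum_range_succ' _ h]
  simp only [firstVisit_update_succ, Nat.sub_sub, Nat.add_comm 1]
  rfl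

variable (Q s) in
lemma visits_eq_sum_firstVisit_mul_returns (ν : S → ℝ) (N : ℕ) :
    visits Q s ν N = ∑ i ∈ range N, firstVisit Q s ν i * returns Q s (N - i) := by
  induction N with
  | zero => simp [visits]
  | succ N ih =>
    have hret (i : ℕ) (hi : i ∈ range (N + 1)) :
        firstVisit Q s ν i * returns Q s (N + 1 - i) = firstVisit Q s ν i * returns Q s (N - i)
          + firstVisit Q s ν i * (Pi.single s 1 ᵥ* Q ^ (N - i)) s := by
      rw [Nat.sub_add_comm (Nat.lt_succ_iff.1 (mem_range.1 hi)), returns, visits,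
        sum_range_succ, mul_add]
      rfl
    rw [visits, sum_range_succ, ← visits, ih, vecMul_pow_apply_eq_sum, sum_congr rfl hret,
      sum_add_distrib, sum_range_succ (fun i => firstVisit Q s ν i * returns Q s (N - i)),
      Nat.sub_self]
    simp [visits]

lemma visits_eq_sum_of_le (ν : S → ℝ) {N M : ℕ} (hNM : N ≤ M) :
    visits Q s ν N = ∑ i ∈ range M, firstVisit Q s ν i * returns Q s (N - i) := by
  rw [visits_eq_sum_firstVisit_mul_returns]
  refine sum_subset (range_subset_range.2 hNM) fun i _ hi => ?_
  rw [Nat.sub_eq_zero_of_le (not_lt.1 (mem_range.not.1 hi))]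
  simp [visits]

variable (Q s) in
lemma visits_add (ν : S → ℝ) (a b : ℕ) :
    visits Q s ν (a + b) = visits Q s ν a + visits Q s (ν ᵥ* Q ^ a) b := by
  simp only [visits, sum_range_add, pow_add, vecMul_vecMul]

variable (Q s) in
lemma hitting_succ (ν : S → ℝ) (N : ℕ) :
    hitting Q s ν (N + 1) =
      ν s + ∑ a : {t // t ≠ s}, Q a s * visits (killedAt Q s) a (fun b => ν b) N := by
  rw [hitting, sum_range_succ', add_comm]
  simp only [firstVisit, visits, mul_sum]
  rw [sum_comm]
  simp only [mul_comm]

variable {ν : S → ℝ}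

lemma visits_nonneg (hQ : IsSubstochastic Q) (hν : 0 ≤ ν) (N : ℕ) : 0 ≤ visits Q s ν N :=
  sum_nonneg fun h _ => vecMul_nonneg (hQ.pow h).nonneg hν s

lemma visits_mono (hQ : IsSubstochastic Q) (hν : 0 ≤ ν) {N M : ℕ} (hNM : N ≤ M) :
    visits Q s ν N ≤ visits Q s ν M :=
  sum_le_sum_of_subset_of_nonneg (range_subset_range.2 hNM) fun h _ _ =>
    vecMul_nonneg (hQ.pow h).nonneg hν s

lemma returns_nonneg (hQ : IsSubstochastic Q) (N : ℕ) : 0 ≤ returns Q s N :=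
  visits_nonneg hQ (Pi.single_nonneg.2 zero_le_one) N

lemma returns_mono (hQ : IsSubstochastic Q) {N M : ℕ} (hNM : N ≤ M) :
    returns Q s N ≤ returns Q s M :=
  visits_mono hQ (Pi.single_nonneg.2 zero_le_one) hNM

lemma firstVisit_nonneg (hQ : IsSubstochastic Q) (hν : 0 ≤ ν) (i : ℕ) :
    0 ≤ firstVisit Q s ν i := by
  cases i with
  | zero => exact hν s
  | succ i => exact sum_nonneg fun a _ =>
      mul_nonneg (vecMul_nonneg (hQ.killedAt.pow i).nonneg (fun b => hν b) a) (hQ.nonneg a s)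

lemma hitting_mono (hQ : IsSubstochastic Q) (hν : 0 ≤ ν) {N M : ℕ} (hNM : N ≤ M) :
    hitting Q s ν N ≤ hitting Q s ν M :=
  sum_le_sum_of_subset_of_nonneg (range_subset_range.2 hNM) fun i _ _ =>
    firstVisit_nonneg hQ hν i

lemma sum_mul_col_add_sum_vecMul_killedAt_le (hQ : IsSubstochastic Q)
    {v : {t // t ≠ s} → ℝ} (hv : 0 ≤ v) :
    ∑ a, v a * Q a s + ∑ b, (v ᵥ* killedAt Q s) b ≤ ∑ a, v a := by
  rw [sum_apply_vecMul, ← sum_add_distrib]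
  refine sum_le_sum fun a _ => ?_
  rw [← mul_add, add_comm]
  refine mul_le_of_le_one_right (hv a) ?_
  have := hQ.sum_row_le_one a
  rwa [Fintype.sum_eq_add_sum_subtype_ne _ s, add_comm] at this

lemma hitting_le_sum (hQ : IsSubstochastic Q) (hν : 0 ≤ ν) (N : ℕ) :
    hitting Q s ν N ≤ ∑ t, ν t := by
  cases N with
  | zero => simpa [hitting] using sum_nonneg fun t _ => hν t
  | succ N =>
    let mass (i : ℕ) := ∑ a, ((fun b : {t // t ≠ s} => ν b) ᵥ* killedAt Q s ^ i) a
    have hstep (i : ℕ) : firstVisit Q s ν (i + 1) ≤ mass i - mass (i + 1) := by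
      have := sum_mul_col_add_sum_vecMul_killedAt_le hQ
        (vecMul_nonneg (hQ.killedAt.pow i).nonneg (fun b : {t // t ≠ s} => hν b))
      rw [vecMul_vecMul, ← pow_succ] at this
      simp only [firstVisit, mass]
      linarith
    have hmass : 0 ≤ mass N :=
      sum_nonneg fun a _ => vecMul_nonneg (hQ.killedAt.pow N).nonneg (fun b => hν b) a
    have htotal : ∑ t, ν t = ν s + mass 0 := by
      simp only [mass, pow_zero, vecMul_one]
      exact Fintype.sum_eq_add_sum_subtype_ne _ s
    calc hitting Q s ν (N + 1) = ν s + ∑ i ∈ range N, firstVisit Q s ν (i + 1) := by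
          rw [hitting, sum_range_succ', add_comm]; rfl
      _ ≤ ν s + ∑ i ∈ range N, (mass i - mass (i + 1)) := by gcongr with i; exact hstep i
      _ ≤ ∑ t, ν t := by rw [sum_range_sub', htotal]; linarith

lemma visits_le_sum_mul_returns (hQ : IsSubstochastic Q) (hν : 0 ≤ ν) (N : ℕ) :
    visits Q s ν N ≤ (∑ t, ν t) * returns Q s N := by
  calc visits Q s ν N = ∑ i ∈ range N, firstVisit Q s ν i * returns Q s (N - i) :=
        visits_eq_sum_firstVisit_mul_returns Q s ν N
    _ ≤ ∑ i ∈ range N, firstVisit Q s ν i * returns Q s N := by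
        gcongr with i
        · exact firstVisit_nonneg hQ hν i
        · exact returns_mono hQ (Nat.sub_le N i)
    _ ≤ (∑ t, ν t) * returns Q s N := by
        rw [← sum_mul]
        exact mul_le_mul_of_nonneg_right (hitting_le_sum hQ hν N) (returns_nonneg hQ N)

lemma returns_add_le (hQ : IsSubstochastic Q) (a b : ℕ) :
    returns Q s (a + b) ≤ returns Q s a + returns Q s b := by
  have hδ : (0 : S → ℝ) ≤ Pi.single s 1 := Pi.single_nonneg.2 zero_le_one
  have hmass : ∑ t, (Pi.single s 1 ᵥ* Q ^ a) t ≤ 1 :=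
    ((hQ.pow a).sum_apply_vecMul_le hδ).trans_eq (by simp)
  rw [returns, visits_add]
  gcongr
  exact (visits_le_sum_mul_returns hQ (vecMul_nonneg (hQ.pow a).nonneg hδ) b).trans
    (mul_le_of_le_one_left (returns_nonneg hQ b) hmass)

lemma visits_add_le (hQ : IsSubstochastic Q) (hν : 0 ≤ ν) (x K : ℕ) :
    visits Q s ν (x + K) ≤ visits Q s ν x + hitting Q s ν (x + K) * returns Q s K := by
  rw [visits_eq_sum_of_le ν le_rfl, visits_eq_sum_of_le ν (Nat.le_add_right x K), hitting,
    sum_mul, ← sum_add_distrib]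
  refine sum_le_sum fun i _ => ?_
  rw [← mul_add]
  refine mul_le_mul_of_nonneg_left ?_ (firstVisit_nonneg hQ hν i)
  calc returns Q s (x + K - i) ≤ returns Q s (x - i + K) := returns_mono hQ (by omega)
    _ ≤ returns Q s (x - i) + returns Q s K := returns_add_le hQ _ _

lemma visits_succ_mul_le (hQ : IsSubstochastic Q) (hν : 0 ≤ ν) (K j : ℕ) :
    visits Q s ν ((j + 1) * K) ≤
      visits Q s ν K + j * (hitting Q s ν ((j + 1) * K) * returns Q s K) := by
  induction j with
  | zero => simp
  | succ j ih =>
    have hhit : hitting Q s ν ((j + 1) * K) ≤ hitting Q s ν ((j + 1 + 1) * K) :=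
      hitting_mono hQ hν (by gcongr; omega)
    calc visits Q s ν ((j + 1 + 1) * K)
        ≤ visits Q s ν ((j + 1) * K) + hitting Q s ν ((j + 1 + 1) * K) * returns Q s K := by
          rw [add_mul _ 1 K, one_mul]; exact visits_add_le hQ hν _ K
      _ ≤ visits Q s ν K +
            (j + 1 : ℕ) * (hitting Q s ν ((j + 1 + 1) * K) * returns Q s K) := by
          push_cast
          nlinarith [mul_le_mul_of_nonneg_right hhit (returns_nonneg hQ K (s := s))]

lemma hitting_mul_returns_le_visits (hQ : IsSubstochastic Q) (hν : 0 ≤ ν) {A B N : ℕ}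
    (hABN : A + B ≤ N + 1) :
    hitting Q s ν A * returns Q s B ≤ visits Q s ν N := by
  rw [visits_eq_sum_of_le ν (le_max_right A N), hitting, sum_mul]
  refine (sum_le_sum fun i hi => ?_).trans (sum_le_sum_of_subset_of_nonneg
    (range_subset_range.2 (le_max_left A N)) fun i _ _ =>
      mul_nonneg (firstVisit_nonneg hQ hν i) (returns_nonneg hQ _))
  exact mul_le_mul_of_nonneg_left (returns_mono hQ (by simp at hi; omega))
    (firstVisit_nonneg hQ hν i)

theorem visits_mul_le_pow_card_mul {S : Type*} [Fintype S] [DecidableEq S] {Q : Matrix S S ℝ}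
    (hQ : IsSubstochastic Q) {ν : S → ℝ} (hν : 0 ≤ ν) (s : S) {m : ℕ} (hm : 1 ≤ m)
    (K : ℕ) :
    visits Q s ν (m * K) ≤ (m : ℝ) ^ Fintype.card S * visits Q s ν (Fintype.card S * K) := by
  obtain ⟨n, hn⟩ : ∃ n, Fintype.card S = n := ⟨_, rfl⟩
  induction n generalizing S with
  | zero => exact absurd hn (Fintype.card_pos_iff.2 ⟨s⟩).ne'
  | succ n ih =>
    rw [hn]
    set c : ℝ := (m : ℝ) ^ n with hc
    have hsub (a : {t // t ≠ s}) :
        visits (killedAt Q s) a (fun b => ν b) (m * K) ≤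
          c * visits (killedAt Q s) a (fun b => ν b) (n * K) := by
      have := ih hQ.killedAt (fun b => hν b) a (by rw [card_subtype_ne, hn]; rfl)
      rwa [card_subtype_ne, hn, Nat.add_sub_cancel] at this
    have hhit : hitting Q s ν (m * K) ≤ c * hitting Q s ν (n * K + 1) := by
      calc hitting Q s ν (m * K) ≤ hitting Q s ν (m * K + 1) :=
            hitting_mono hQ hν (Nat.le_succ _)
        _ ≤ _ := by
          rw [hitting_succ, hitting_succ, mul_add, mul_sum]
          refine add_le_add (le_mul_of_one_le_left (hν s) (one_le_pow₀ (by simpa))) ?_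
          refine sum_le_sum fun a _ => ?_
          rw [mul_left_comm]
          exact mul_le_mul_of_nonneg_left (hsub a) (hQ.nonneg a s)
    have hlow : hitting Q s ν (n * K + 1) * returns Q s K ≤ visits Q s ν ((n + 1) * K) :=
      hitting_mul_returns_le_visits hQ hν (by rw [add_mul, one_mul]; omega)
    have hreturn : hitting Q s ν (m * K) * returns Q s K ≤ c * visits Q s ν ((n + 1) * K) := by
      calc hitting Q s ν (m * K) * returns Q s K
          ≤ c * hitting Q s ν (n * K + 1) * returns Q s K :=
            mul_le_mul_of_nonneg_right hhit (returns_nonneg hQ K)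
        _ ≤ c * visits Q s ν ((n + 1) * K) := by
            rw [mul_assoc]; exact mul_le_mul_of_nonneg_left hlow (by positivity)
    obtain ⟨j, rfl⟩ := Nat.exists_eq_add_of_le' hm
    calc visits Q s ν ((j + 1) * K)
        ≤ visits Q s ν K + j * (hitting Q s ν ((j + 1) * K) * returns Q s K) :=
          visits_succ_mul_le hQ hν K j
      _ ≤ visits Q s ν ((n + 1) * K) + j * (c * visits Q s ν ((n + 1) * K)) :=
          add_le_add (visits_mono hQ hν (Nat.le_mul_of_pos_left K n.succ_pos))
            (mul_le_mul_of_nonneg_left hreturn (Nat.cast_nonneg j))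
      _ ≤ ((j + 1 : ℕ) : ℝ) ^ (n + 1) * visits Q s ν ((n + 1) * K) := by
          have hc1 : 1 ≤ c := one_le_pow₀ (by simp)
          rw [pow_succ, ← hc, Nat.cast_succ]
          nlinarith [visits_nonneg hQ hν ((n + 1) * K) (s := s)]

end MarkovChain

open MarkovChain

lemma pReach_zero {S : Type} [Fintype S] (μ : S → ℝ) (P : S → S → ℝ) (s : S) :
    pReach μ P 0 s = μ s := by
  simp [pReach]

lemma pReach_succ {S : Type} [Fintype S] (μ : S → ℝ) (P : S → S → ℝ) (L : ℕ) (s : S) :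
    pReach μ P (L + 1) s = ∑ t, pReach μ P L t * P t s := by
  simp only [pReach, sum_mul]
  rw [← (Fin.snocEquiv fun _ => S).sum_comp, Fintype.sum_prod_type]
  refine sum_congr rfl fun t _ => sum_congr rfl fun T _ => ?_
  set f : ℕ → S := fun n => if h : n < L then T ⟨n, h⟩ else t
  have hf (n : ℕ) (hn : n ≤ L) :
      (if h : n < L + 1 then Fin.snoc (α := fun _ => S) T t ⟨n, h⟩ else s) = f n := by
    simp [f, Fin.snoc, Nat.lt_succ_of_le hn]
  have hfL : f L = t := dif_neg (lt_irrefl L)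
  simp only [Fin.snocEquiv_apply]
  rw [prod_range_succ, hf 0 L.zero_le, hf L le_rfl, dif_neg (lt_irrefl _), hfL, mul_assoc,
    prod_congr rfl fun h hh => by rw [hf h (mem_range.1 hh).le, hf (h + 1) (mem_range.1 hh)]]

lemma pReach_eq_vecMul_pow_apply {S : Type} [Fintype S] [DecidableEq S] (μ : S → ℝ)
    (P : S → S → ℝ) (h : ℕ) (s : S) : pReach μ P h s = (μ ᵥ* Matrix.of P ^ h) s := by
  induction h generalizing s with
  | zero => rw [pReach_zero, pow_zero, vecMul_one]
  | succ h ih =>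
    rw [pReach_succ, pow_succ, ← vecMul_vecMul]
    simp only [ih]
    rfl

lemma four_mul_pow_le (n : ℕ) : (4 * n) ^ n ≤ 4 * n ^ (4 * n) := by
  rcases Nat.lt_or_ge n 2 with hn | hn
  · interval_cases n <;> norm_num
  · calc (4 * n) ^ n ≤ (n ^ 4) ^ n := by
          gcongr
          nlinarith [Nat.pow_le_pow_left hn 3]
      _ ≤ 4 * n ^ (4 * n) := by rw [← pow_mul]; omega

lemma two_mul_add_one_le_four_mul_mul_div {n L : ℕ} (hn : 0 < n) (hL : n ≤ L) :
    2 * L + 1 ≤ 4 * n * (L / n) := by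
  have hK : n ≤ n * (L / n) := Nat.le_mul_of_pos_right n (Nat.div_pos hL hn)
  have hlt : L < n * (L / n) + n := by
    have := Nat.lt_mul_div_succ L hn
    linarith
  rw [mul_assoc]
  omega

theorem stmt3_general {S : Type} [Fintype S]
    (μ : S → ℝ) (P : S → S → ℝ)
    (hμ0 : ∀ s, 0 ≤ μ s)
    (hP0 : ∀ s s', 0 ≤ P s s') (hP1 : ∀ s, ∑ s', P s s' = 1)
    (s : S) (L : ℕ) (hL : Fintype.card S ≤ L) :
    ∑ h ∈ Finset.range (2 * L + 1), pReach μ P h s ≤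
      4 * (Fintype.card S : ℝ) ^ (4 * Fintype.card S) *
        ∑ h ∈ Finset.range L, pReach μ P h s := by
  classical
  have hP : IsSubstochastic (Matrix.of P) := ⟨hP0, fun t => (hP1 t).le⟩
  have hμ : 0 ≤ μ := hμ0
  have hvisits (N : ℕ) : ∑ h ∈ range N, pReach μ P h s = visits (Matrix.of P) s μ N :=
    sum_congr rfl fun h _ => pReach_eq_vecMul_pow_apply μ P h s
  rw [hvisits, hvisits]
  set n := Fintype.card S
  have hn : 0 < n := Fintype.card_pos_iff.2 ⟨s⟩
  calc visits (Matrix.of P) s μ (2 * L + 1)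
      ≤ visits (Matrix.of P) s μ (4 * n * (L / n)) :=
        visits_mono hP hμ (two_mul_add_one_le_four_mul_mul_div hn hL)
    _ ≤ ((4 * n : ℕ) : ℝ) ^ n * visits (Matrix.of P) s μ (n * (L / n)) :=
        visits_mul_le_pow_card_mul hP hμ s (by omega) _
    _ ≤ 4 * (n : ℝ) ^ (4 * n) * visits (Matrix.of P) s μ L := by
        gcongr
        · exact visits_nonneg hP hμ _
        · exact_mod_cast four_mul_pow_le n
        · exact visits_mono hP hμ (Nat.mul_div_le L n)

theorem stmt3 {S : Type} [Fintype S]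
    (μ : S → ℝ) (P : S → S → ℝ)
    (hμ0 : ∀ s, 0 ≤ μ s) (hμ1 : ∑ s, μ s = 1)
    (hP0 : ∀ s s', 0 ≤ P s s') (hP1 : ∀ s, ∑ s', P s s' = 1)
    (s : S) (L : ℕ) (hL : Fintype.card S ≤ L) :
    ∑ h ∈ Finset.range (2 * L + 1), pReach μ P h s ≤
      4 * (Fintype.card S : ℝ) ^ (4 * Fintype.card S) *
        ∑ h ∈ Finset.range L, pReach μ P h s :=
  stmt3_general μ P hμ0 hP0 hP1 s L hL
end

section
/- Let M = (S, A, P, R, H, μ) be a finite MDP and π : S → A a stationary policy. If H ≥ 2|S|, then V^π_{M,⌊H/2⌋} ≥ (1/(4 · |S|^{4|S|})) · V^π_{M,H}. -/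
open Finset

/-- Finite-horizon value of a stationary policy, written via the induced Markov chain `Pc` and
mean reward function `rc`: `V = Σ_s Σ_{h<L} p_h(s) · E[R(s, π(s))]`. -/
noncomputable def Vfin {S : Type} [Fintype S] (μ : S → ℝ) (Pc : S → S → ℝ) (rc : S → ℝ)
    (L : ℕ) : ℝ :=
  ∑ s : S, (∑ h ∈ Finset.range L, pReach μ Pc h s) * rc s

/-!
Let `Q` be the transition matrix of `π` and `q h = p_h(s) = ∑ y, μ y * (Q ^ h) y s`. A walk
through `|S| + 1` positions visits some state twice; cutting out the closed subwalk between the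
two visits (of weight at most `1`, as `Q` is stochastic) shows entrywise
`Q ^ |S| ≤ |S| • ∑ m < |S|, Q ^ m`. Applied to `Q ^ d` this gives
`q (Y + d |S|) ≤ |S| ∑ m < |S|, q (Y + d m)`, so a block of `d` consecutive values of `q` beyond
`d |S|` is at most `|S|` times the sum of all earlier values. With `T = ⌊H/2⌋` and
`d = ⌊T/|S|⌋`, the horizon `H` is covered by `T` steps followed by `2|S|` blocks, so the partial
sums grow by at most the factor `(|S| + 1) ^ (2|S|) ≤ 4 |S| ^ (4|S|)`; the rewards are
nonnegative, so the bound passes from each `p_h(s)` to the value.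
-/

lemma Fin.sum_fun_eq_sum_snoc {S M : Type*} [Fintype S] [AddCommMonoid M] {k : ℕ}
    (F : (Fin (k + 1) → S) → M) :
    ∑ x, F x = ∑ x : Fin k → S, ∑ y, F (Fin.snoc x y) := by
  rw [← (Fin.snocEquiv fun _ => S).sum_comp, Fintype.sum_prod_type_right]
  rfl

namespace Matrix

variable {S α : Type*}

section CommSemiring

variable [CommSemiring α]

def walkWeight (R : Matrix S S α) {k : ℕ} (x : Fin (k + 1) → S) : α :=
  ∏ t : Fin k, R (x t.castSucc) (x t.succ)

lemma walkWeight_snoc (R : Matrix S S α) {k : ℕ} (x : Fin (k + 1) → S) (y : S) :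
    walkWeight R (Fin.snoc x y : Fin (k + 1 + 1) → S) = walkWeight R x * R (x (Fin.last k)) y := by
  simp [walkWeight, Fin.prod_univ_castSucc, Fin.succ_castSucc, -Fin.castSucc_succ]

variable [Fintype S] [DecidableEq S]

lemma sum_walkWeight_mul_prefix (R : Matrix S S α) {j k : ℕ} (hjk : j ≤ k)
    (G : (Fin (j + 1) → S) → S → α) :
    ∑ x : Fin (k + 1) → S,
        walkWeight R x * G (fun t => x (Fin.castLE (by omega) t)) (x (Fin.last k)) =
      ∑ y : Fin (j + 1) → S, walkWeight R y * ∑ b, (R ^ (k - j)) (y (Fin.last j)) b * G y b := by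
  induction k, hjk using Nat.le_induction generalizing G with
  | base => simp [one_apply]
  | succ k hjk ih =>
    have hprefix : ∀ (x : Fin (k + 1) → S) (y : S),
        (fun t => (Fin.snoc x y : Fin (k + 1 + 1) → S) (Fin.castLE (by omega) t)) =
          fun t : Fin (j + 1) => x (Fin.castLE (by omega) t) := fun x y =>
      funext fun t => Fin.snoc_castSucc (α := fun _ => S) (i := Fin.castLE (by omega) t) y x
    rw [Fin.sum_fun_eq_sum_snoc]
    simp only [walkWeight_snoc, Fin.snoc_last, hprefix, mul_assoc, ← mul_sum]
    rw [ih fun p b => ∑ y, R b y * G p y]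
    refine sum_congr rfl fun y _ => congrArg _ ?_
    simp only [Nat.succ_sub hjk, pow_succ, mul_apply, mul_sum, sum_mul, mul_assoc]
    exact sum_comm

lemma sum_walkWeight_mul (R : Matrix S S α) (k : ℕ) (G : S → S → α) :
    ∑ x : Fin (k + 1) → S, walkWeight R x * G (x 0) (x (Fin.last k)) =
      ∑ a, ∑ b, (R ^ k) a b * G a b := by
  have h := sum_walkWeight_mul_prefix R (Nat.zero_le k) fun y b => G (y 0) b
  rw [← (Equiv.funUnique (Fin 1) S).symm.sum_comp] at h
  simpa [walkWeight] using h

end CommSemiring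

section OrderedSemiring

open Fin.NatCast

variable [CommSemiring α] [PartialOrder α] [IsOrderedRing α] {R : Matrix S S α}

lemma walkWeight_nonneg (hR : ∀ a b, 0 ≤ R a b) {k : ℕ} (x : Fin (k + 1) → S) :
    0 ≤ walkWeight R x :=
  prod_nonneg fun _ _ => hR _ _

variable [Fintype S] [DecidableEq S]

/-- Cutting out the closed subwalk between positions `i` and `j`, whose weight is at most `1`. -/
lemma sum_walkWeight_mul_ite_le (hR : R ∈ rowStochastic α S) {i j n : ℕ} (hij : i ≤ j)
    (hjn : j ≤ n) (a b : S) :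
    ∑ x : Fin (n + 1) → S,
        walkWeight R x * (if x 0 = a ∧ x i = x j ∧ x (Fin.last n) = b then 1 else 0) ≤
      (R ^ (i + (n - j))) a b := by
  have hj := sum_walkWeight_mul_prefix R hjn fun y c =>
    if y 0 = a ∧ y i = y (Fin.last j) ∧ c = b then (1 : α) else 0
  have hi := sum_walkWeight_mul_prefix R hij fun u c =>
    if u 0 = a ∧ u (Fin.last i) = c then (R ^ (n - j)) c b else 0
  have h0 := sum_walkWeight_mul R i fun a' z => if a' = a then (R ^ (n - j)) z b else 0
  calc _ = ∑ y : Fin (j + 1) → S, walkWeight R y *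
          (if y 0 = a ∧ y i = y (Fin.last j) then (R ^ (n - j)) (y (Fin.last j)) b else 0) := by
        refine Eq.trans ?_ (hj.trans ?_) <;> refine sum_congr rfl fun x _ => ?_
        · simp [← Fin.natCast_eq_last, Nat.mod_eq_of_lt (Nat.lt_succ_of_le hij)]
        · simp [← and_assoc, ite_and, mul_ite]
    _ = ∑ u : Fin (i + 1) → S, walkWeight R u *
          (if u 0 = a then (R ^ (j - i)) (u (Fin.last i)) (u (Fin.last i)) *
            (R ^ (n - j)) (u (Fin.last i)) b else 0) := by
        refine Eq.trans ?_ (hi.trans ?_) <;> refine sum_congr rfl fun x _ => ?_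
        · simp [← Fin.natCast_eq_last]
        · simp [ite_and, mul_ite]
    _ ≤ ∑ u : Fin (i + 1) → S, walkWeight R u *
          (if u 0 = a then (R ^ (n - j)) (u (Fin.last i)) b else 0) := by
        refine sum_le_sum fun u _ => mul_le_mul_of_nonneg_left ?_
          (walkWeight_nonneg (fun _ _ => nonneg_of_mem_rowStochastic hR) u)
        split_ifs
        · exact mul_le_of_le_one_left (nonneg_of_mem_rowStochastic (pow_mem hR _))
            (le_one_of_mem_rowStochastic (pow_mem hR _))
        · rfl
    _ = (R ^ (i + (n - j))) a b := by
        rw [h0, pow_add, mul_apply]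
        simp

lemma pow_card_apply_le (hR : R ∈ rowStochastic α S) (a b : S) :
    (R ^ Fintype.card S) a b ≤ Fintype.card S * ∑ m ∈ range (Fintype.card S), (R ^ m) a b := by
  set n := Fintype.card S
  -- `cut x m i`: the walk `x` returns at position `i + (n - m)` to its state at position `i`,
  -- so that cutting out the cycle leaves a walk of length `m`
  set cut : (Fin (n + 1) → S) → ℕ → ℕ → α := fun x m i =>
    if x 0 = a ∧ x i = x ((i + (n - m) : ℕ)) ∧ x (Fin.last n) = b then 1 else 0
  have hcut : ∀ x m i, 0 ≤ cut x m i := fun _ _ _ => ite_nonneg zero_le_one le_rfl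
  have hrepeat : ∀ x : Fin (n + 1) → S, (if x 0 = a ∧ x (Fin.last n) = b then (1 : α) else 0) ≤
      ∑ m ∈ range n, ∑ i ∈ range (m + 1), cut x m i := by
    intro x
    split_ifs with hab
    · obtain ⟨i, j, hij, hx⟩ : ∃ i j : Fin (n + 1), i < j ∧ x i = x j := by
        obtain ⟨i, j, hne, hx⟩ := Fintype.exists_ne_map_eq_of_card_lt x (by simp [n])
        rcases lt_or_gt_of_ne hne with h | h
        exacts [⟨i, j, h, hx⟩, ⟨j, i, h, hx.symm⟩]
      have hij : (i : ℕ) < j := hij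
      have hjn : (j : ℕ) ≤ n := Nat.lt_succ_iff.mp j.isLt
      set m := n - ((j : ℕ) - i)
      have hj : (i : ℕ) + (n - m) = j := by omega
      calc (1 : α) = cut x m i := by simp only [cut, hj, Fin.cast_val_eq_self, hx, hab]; simp
        _ ≤ ∑ i ∈ range (m + 1), cut x m i :=
          single_le_sum (f := cut x m) (fun _ _ => hcut _ _ _) (by simp; omega)
        _ ≤ _ := single_le_sum (f := fun m => ∑ i ∈ range (m + 1), cut x m i)
          (fun _ _ => sum_nonneg fun _ _ => hcut _ _ _) (by simp; omega)
    · exact sum_nonneg fun _ _ => sum_nonneg fun _ _ => hcut _ _ _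
  calc (R ^ n) a b = ∑ x : Fin (n + 1) → S,
        walkWeight R x * (if x 0 = a ∧ x (Fin.last n) = b then 1 else 0) := by
        rw [sum_walkWeight_mul R n fun a' b' => if a' = a ∧ b' = b then 1 else 0]
        simp [ite_and, mul_ite]
    _ ≤ ∑ x : Fin (n + 1) → S, walkWeight R x * ∑ m ∈ range n, ∑ i ∈ range (m + 1), cut x m i :=
        sum_le_sum fun x _ => mul_le_mul_of_nonneg_left (hrepeat x)
          (walkWeight_nonneg (fun _ _ => nonneg_of_mem_rowStochastic hR) x)
    _ = ∑ m ∈ range n, ∑ i ∈ range (m + 1), ∑ x : Fin (n + 1) → S, walkWeight R x * cut x m i := by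
        simp only [mul_sum]
        rw [sum_comm]
        exact sum_congr rfl fun _ _ => sum_comm
    _ ≤ ∑ m ∈ range n, ∑ i ∈ range (m + 1), (R ^ m) a b := by
        refine sum_le_sum fun m hm => sum_le_sum fun i hi => ?_
        rw [mem_range] at hm hi
        have h := sum_walkWeight_mul_ite_le hR (i := i) (j := i + (n - m)) (n := n)
          (by omega) (by omega) a b
        rwa [show i + (n - (i + (n - m))) = m by omega] at h
    _ ≤ ∑ m ∈ range n, (n : α) * (R ^ m) a b := by
        refine sum_le_sum fun m hm => ?_
        rw [sum_const, card_range, nsmul_eq_mul]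
        exact mul_le_mul_of_nonneg_right (Nat.mono_cast (mem_range.mp hm))
          (nonneg_of_mem_rowStochastic (pow_mem hR m))
    _ = n * ∑ m ∈ range n, (R ^ m) a b := (mul_sum ..).symm

lemma pow_add_mul_card_apply_le (hR : R ∈ rowStochastic α S) (d Y : ℕ) (a b : S) :
    (R ^ (Y + d * Fintype.card S)) a b ≤
      Fintype.card S * ∑ m ∈ range (Fintype.card S), (R ^ (Y + d * m)) a b := by
  simp only [pow_add, pow_mul, mul_apply, mul_sum]
  rw [sum_comm]
  refine sum_le_sum fun z _ => ?_
  rw [← mul_sum, ← mul_sum, mul_left_comm]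
  exact mul_le_mul_of_nonneg_left (pow_card_apply_le (pow_mem hR d) z b)
    (nonneg_of_mem_rowStochastic (pow_mem hR Y))

end OrderedSemiring

end Matrix

lemma sum_range_mul_eq_sum_sum {M : Type*} [AddCommMonoid M] (g : ℕ → M) (d n : ℕ) :
    ∑ u ∈ range (d * n), g u = ∑ m ∈ range n, ∑ t ∈ range d, g (d * m + t) := by
  induction n with
  | zero => simp
  | succ n ih => rw [Nat.mul_succ, sum_range_add, ih, sum_range_succ]

section PartialSums

variable {α : Type*} [CommSemiring α] [PartialOrder α] [IsOrderedRing α] {f : ℕ → α} {n d : ℕ}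

lemma sum_range_add_le (hf : ∀ h, 0 ≤ f h)
    (hrec : ∀ Y, f (Y + d * n) ≤ n * ∑ m ∈ range n, f (Y + d * m)) {X : ℕ} (hX : d * n ≤ X) :
    ∑ h ∈ range (X + d), f h ≤ (n + 1) * ∑ h ∈ range X, f h := by
  obtain ⟨Z, rfl⟩ := Nat.exists_eq_add_of_le' hX
  have hblock : ∑ t ∈ range d, f (Z + d * n + t) ≤ n * ∑ h ∈ range (Z + d * n), f h :=
    calc ∑ t ∈ range d, f (Z + d * n + t)
        ≤ ∑ t ∈ range d, n * ∑ m ∈ range n, f (Z + t + d * m) :=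
          sum_le_sum fun t _ => by rw [add_right_comm]; exact hrec (Z + t)
      _ = n * ∑ u ∈ range (d * n), f (Z + u) := by
          rw [← mul_sum, sum_comm, sum_range_mul_eq_sum_sum]
          exact congrArg _ (sum_congr rfl fun _ _ => sum_congr rfl fun _ _ => congrArg f (by ring))
      _ ≤ n * ∑ h ∈ range (Z + d * n), f h := by
          rw [sum_range_add]
          exact mul_le_mul_of_nonneg_left (le_add_of_nonneg_left (sum_nonneg fun _ _ => hf _))
            (Nat.cast_nonneg n)
  calc ∑ h ∈ range (Z + d * n + d), f h
      = ∑ h ∈ range (Z + d * n), f h + ∑ t ∈ range d, f (Z + d * n + t) := sum_range_add ..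
    _ ≤ ∑ h ∈ range (Z + d * n), f h + n * ∑ h ∈ range (Z + d * n), f h := by gcongr
    _ = (n + 1) * ∑ h ∈ range (Z + d * n), f h := by ring

lemma sum_range_add_mul_le (hf : ∀ h, 0 ≤ f h)
    (hrec : ∀ Y, f (Y + d * n) ≤ n * ∑ m ∈ range n, f (Y + d * m)) {X : ℕ} (hX : d * n ≤ X)
    (k : ℕ) : ∑ h ∈ range (X + d * k), f h ≤ (n + 1) ^ k * ∑ h ∈ range X, f h := by
  induction k with
  | zero => simp
  | succ k ih =>
    calc ∑ h ∈ range (X + d * (k + 1)), f h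
        ≤ (n + 1) * ∑ h ∈ range (X + d * k), f h := by
          rw [mul_add_one, ← add_assoc]
          exact sum_range_add_le hf hrec (hX.trans (Nat.le_add_right _ _))
      _ ≤ (n + 1) * ((n + 1) ^ k * ∑ h ∈ range X, f h) :=
          mul_le_mul_of_nonneg_left ih (add_nonneg n.cast_nonneg zero_le_one)
      _ = (n + 1) ^ (k + 1) * ∑ h ∈ range X, f h := by ring

lemma sum_range_le_pow_mul_sum_range_half (hf : ∀ h, 0 ≤ f h) (hn : 0 < n)
    (hrec : ∀ d Y, f (Y + d * n) ≤ n * ∑ m ∈ range n, f (Y + d * m)) {H : ℕ} (hH : 2 * n ≤ H) :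
    ∑ h ∈ range H, f h ≤ (n + 1) ^ (2 * n) * ∑ h ∈ range (H / 2), f h := by
  set T := H / 2
  set d := T / n
  have hdn : d * n ≤ T := Nat.div_mul_le_self T n
  have hTd : T < n * d + n := by simpa [mul_add] using Nat.lt_mul_div_succ T hn
  have hnd : n ≤ n * d := Nat.le_mul_of_pos_right n (Nat.div_pos (by omega) hn)
  -- `T < n (d + 1) ≤ 2 n d`, so `H ≤ 2 T + 1 ≤ T + 2 n d`
  have hHT : H ≤ T + d * (2 * n) := by
    rw [mul_left_comm, mul_comm d n]
    omega
  calc ∑ h ∈ range H, f h ≤ ∑ h ∈ range (T + d * (2 * n)), f h :=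
        sum_le_sum_of_subset_of_nonneg (range_mono hHT) fun _ _ _ => hf _
    _ ≤ _ := sum_range_add_mul_le hf (hrec d) hdn (2 * n)

end PartialSums

lemma succ_pow_two_mul_le_four_mul_pow {n : ℕ} (hn : 0 < n) : (n + 1) ^ (2 * n) ≤ 4 * n ^ (4 * n) := by
  obtain rfl | hn := eq_or_lt_of_le (Nat.succ_le_of_lt hn)
  · norm_num
  calc (n + 1) ^ (2 * n) ≤ (n ^ 2) ^ (2 * n) := Nat.pow_le_pow_left (by nlinarith) _
    _ = n ^ (4 * n) := by rw [← pow_mul, ← mul_assoc]; rfl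
    _ ≤ 4 * n ^ (4 * n) := Nat.le_mul_of_pos_left _ (by norm_num)

section Reach

variable {S : Type} [Fintype S] [DecidableEq S] {μ : S → ℝ} {P : S → S → ℝ}

lemma pReach_eq_sum_mul_pow (L : ℕ) (s : S) :
    pReach μ P L s = ∑ y, μ y * (Matrix.of P ^ L) y s := by
  have hwalk := Matrix.sum_walkWeight_mul (Matrix.of P) L fun a b => if b = s then μ a else 0
  rw [Fin.sum_fun_eq_sum_snoc] at hwalk
  simp only [mul_ite, mul_zero, Fin.snoc_last, sum_ite_eq', mem_univ, if_true] at hwalk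
  simp only [mul_comm (μ _), ← hwalk, pReach]
  refine sum_congr rfl fun T _ => ?_
  rw [Matrix.walkWeight, ← Fin.prod_univ_eq_prod_range]
  -- the path `fun n => if h : n < L then T ⟨n, h⟩ else s` in `pReach` is `Fin.snoc T s` by
  -- definition
  rfl

lemma pReach_nonneg_s5 (hμ : ∀ s, 0 ≤ μ s) (hP : Matrix.of P ∈ Matrix.rowStochastic ℝ S) (L : ℕ) (s : S) :
    0 ≤ pReach μ P L s := by
  rw [pReach_eq_sum_mul_pow]
  exact sum_nonneg fun y _ =>
    mul_nonneg (hμ y) (Matrix.nonneg_of_mem_rowStochastic (pow_mem hP L))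

lemma pReach_add_mul_card_le (hμ : ∀ s, 0 ≤ μ s) (hP : Matrix.of P ∈ Matrix.rowStochastic ℝ S)
    (s : S) (d Y : ℕ) :
    pReach μ P (Y + d * Fintype.card S) s ≤
      Fintype.card S * ∑ m ∈ range (Fintype.card S), pReach μ P (Y + d * m) s := by
  simp only [pReach_eq_sum_mul_pow, mul_sum]
  rw [sum_comm]
  refine sum_le_sum fun y _ => ?_
  calc μ y * (Matrix.of P ^ (Y + d * Fintype.card S)) y s
      ≤ μ y * (Fintype.card S * ∑ m ∈ range (Fintype.card S), (Matrix.of P ^ (Y + d * m)) y s) :=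
        mul_le_mul_of_nonneg_left (Matrix.pow_add_mul_card_apply_le hP d Y y s) (hμ y)
    _ = _ := by simp only [mul_sum, mul_left_comm]

end Reach

theorem stmt5_general {S A : Type} [Fintype S]
    (μ : S → ℝ) (P : S → A → S → ℝ) (Rmean : S → A → ℝ) (H : ℕ)
    (hμ0 : ∀ s, 0 ≤ μ s)
    (hP0 : ∀ s a s', 0 ≤ P s a s') (hP1 : ∀ s a, ∑ s', P s a s' = 1)
    (hR : ∀ s a, Rmean s a ∈ Set.Icc (0 : ℝ) 1)
    (π : S → A)
    (hH : 2 * Fintype.card S ≤ H) :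
    (1 / (4 * (Fintype.card S : ℝ) ^ (4 * Fintype.card S))) *
        Vfin μ (fun s s' => P s (π s) s') (fun s => Rmean s (π s)) H ≤
      Vfin μ (fun s s' => P s (π s) s') (fun s => Rmean s (π s)) (H / 2) := by
  classical
  rcases isEmpty_or_nonempty S with _ | _
  · simp [Vfin]
  have hn : 0 < Fintype.card S := Fintype.card_pos
  set n := Fintype.card S
  set Pc : S → S → ℝ := fun s s' => P s (π s) s'
  have hQ : Matrix.of Pc ∈ Matrix.rowStochastic ℝ S :=
    Matrix.mem_rowStochastic_iff_sum.mpr ⟨fun s s' => hP0 s (π s) s', fun s => hP1 s (π s)⟩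
  have hC : (n + 1 : ℝ) ^ (2 * n) ≤ 4 * n ^ (4 * n) := by exact_mod_cast succ_pow_two_mul_le_four_mul_pow hn
  have hstate : ∀ s, ∑ h ∈ range H, pReach μ Pc h s ≤
      4 * n ^ (4 * n) * ∑ h ∈ range (H / 2), pReach μ Pc h s := fun s =>
    (sum_range_le_pow_mul_sum_range_half (fun _ => pReach_nonneg_s5 hμ0 hQ _ s) hn
      (pReach_add_mul_card_le hμ0 hQ s) hH).trans
      (mul_le_mul_of_nonneg_right hC (sum_nonneg fun _ _ => pReach_nonneg_s5 hμ0 hQ _ s))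
  rw [one_div, inv_mul_le_iff₀ (by positivity), Vfin, Vfin, mul_sum]
  refine sum_le_sum fun s _ => ?_
  rw [← mul_assoc]
  exact mul_le_mul_of_nonneg_right (hstate s) (hR s (π s)).1

theorem stmt5 {S A : Type} [Fintype S]
    (μ : S → ℝ) (P : S → A → S → ℝ) (Rmean : S → A → ℝ) (H : ℕ)
    (hμ0 : ∀ s, 0 ≤ μ s) (hμ1 : ∑ s, μ s = 1)
    (hP0 : ∀ s a s', 0 ≤ P s a s') (hP1 : ∀ s a, ∑ s', P s a s' = 1)
    (hR : ∀ s a, Rmean s a ∈ Set.Icc (0 : ℝ) 1)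
    (π : S → A)
    (hH : 2 * Fintype.card S ≤ H) :
    (1 / (4 * (Fintype.card S : ℝ) ^ (4 * Fintype.card S))) *
        Vfin μ (fun s s' => P s (π s) s') (fun s => Rmean s (π s)) H ≤
      Vfin μ (fun s s' => P s (π s) s') (fun s => Rmean s (π s)) (H / 2) :=
  stmt5_general μ P Rmean H hμ0 hP0 hP1 hR π hH
end

section
/- Let M = (S, A, P, R, H, μ) be a finite MDP, let z = (s_z, a_z) ∈ S × A, suppose the initial distribution μ is the point mass at s_z, and suppose H ≥ 2·ln(8 · |S|^{4|S|}). If there exists a (possibly non-stationary) deterministic policy π′ such that Q^{π′}_ε(s_z, a_z) ≥ f for some real ε ∈ (0,1] and some integer 0 ≤ f ≤ H, then there exists a stationary policy π : S → A such that Q_{1/2}(Σ_{h=0}^{⌊H/2⌋−1} 1[(s_h, a_h) = z]) ≥ ⌊(1/(2048 · |S|^{12|S|})) · ε · f⌋, where (s_0, a_0), …, (s_{H−1}, a_{H−1}), s_H is a random trajectory induced by executing π in M. -/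
/-!
Discount with `γ ^ (H / 2) = 1 / 2`. By Markov's inequality `π'` visits `z` at least `ε f` times
in expectation, so its `H`-step discounted visit count is at least `γ ^ H ε f ≥ ε f / 8`, and so is
the optimal `H`-step discounted value `u`. Since no reward is collected away from `z.1`, `u` is
largest at `z.1`, and this makes the stationary policy greedy for `u` collect at least
`u s - γ ^ k u z.1` discounted visits in `k` steps; for `k = H / 2` its expected number of visits is
at least `ε f / 16`. Finally, for a stationary policy started at `z.1` the visit count `N` satisfies
`E N ≤ m + Pr[N ≥ m] E N`, because after its `m`-th visit the chain restarts from `z.1`; hence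
`Pr[N ≥ m] ≥ 1 / 2` as soon as `E N > 2 m`.
-/

open Finset

/-- Extend a trajectory `(s_0, …, s_H)` to a function `ℕ → S` (constant after time `H`). -/
def extT {S : Type} (H : ℕ) (T : Fin (H + 1) → S) : ℕ → S :=
  fun n => T ⟨min n H, Nat.lt_succ_of_le (Nat.min_le_right n H)⟩

/-- Probability of the trajectory with state sequence `f` under the (possibly non-stationary)
deterministic policy `π`: `p(T, M, π) = μ(s_0) · ∏_{h<H} P(s_{h+1} ∣ s_h, π_h(s_h))`. -/
noncomputable def trajP {S A : Type} (μ : S → ℝ) (P : S → A → S → ℝ)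
    (π : ℕ → S → A) (H : ℕ) (f : ℕ → S) : ℝ :=
  μ (f 0) * ∏ h ∈ Finset.range H, P (f h) (π h (f h)) (f (h + 1))

/-- Number of times the state-action pair `z` is visited during the first `K` steps of the
trajectory with state sequence `f`, when actions are chosen by the policy `π`. -/
def nVisits {S A : Type} [DecidableEq S] [DecidableEq A] (π : ℕ → S → A) (K : ℕ)
    (z : S × A) (f : ℕ → S) : ℕ :=
  ∑ h ∈ Finset.range K, if (f h, π h (f h)) = z then 1 else 0

/-- The `d`-quantile `Q_d(X) = sup {x ∣ Pr[X ≥ x] ≥ d}` of the random variable `X` of the random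
trajectory induced by executing the policy `π` in the `H`-horizon MDP `(μ, P)`. -/
noncomputable def quantNS {S A : Type} [Fintype S] (μ : S → ℝ) (P : S → A → S → ℝ)
    (π : ℕ → S → A) (H : ℕ) (X : (ℕ → S) → ℝ) (d : ℝ) : ℝ :=
  sSup {x : ℝ | d ≤ ∑ T : Fin (H + 1) → S,
    if x ≤ X (extT H T) then trajP μ P π H (extT H T) else 0}

section Paths

variable {S A : Type}

def pathCons (x : S) (g : ℕ → S) : ℕ → S
  | 0 => x
  | n + 1 => g n

@[simp] lemma pathCons_zero (x : S) (g : ℕ → S) : pathCons x g 0 = x := rfl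

@[simp] lemma pathCons_succ (x : S) (g : ℕ → S) (n : ℕ) : pathCons x g (n + 1) = g n := rfl

lemma extT_zero (T : Fin 1 → S) : extT 0 T = fun _ => T 0 := by
  funext n
  exact congrArg T (Subsingleton.elim _ _)

lemma extT_succ_cons {k : ℕ} (x : S) (T : Fin (k + 1) → S) :
    extT (k + 1) (Fin.cons x T) = pathCons x (extT k T) := by
  funext n
  cases n with
  | zero => rfl
  | succ n =>
    simp only [extT, pathCons_succ, Nat.succ_min_succ]
    exact Fin.cons_succ (α := fun _ => S) x T ⟨min n k, _⟩

lemma trajP_pathCons (μ : S → ℝ) (P : S → A → S → ℝ) (ρ : ℕ → S → A) (k : ℕ) (x : S)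
    (g : ℕ → S) :
    trajP μ P ρ (k + 1) (pathCons x g) =
      μ x * trajP (P x (ρ 0 x)) P (fun h => ρ (h + 1)) k g := by
  simp only [trajP, prod_range_succ', pathCons_succ, pathCons_zero]
  ring

lemma nVisits_pathCons [DecidableEq S] [DecidableEq A] (ρ : ℕ → S → A) (k : ℕ) (z : S × A)
    (x : S) (g : ℕ → S) :
    nVisits ρ (k + 1) z (pathCons x g) =
      (if (x, ρ 0 x) = z then 1 else 0) + nVisits (fun h => ρ (h + 1)) k z g := by
  simp only [nVisits, sum_range_succ', pathCons_succ, pathCons_zero]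
  exact add_comm _ _

lemma nVisits_le [DecidableEq S] [DecidableEq A] (ρ : ℕ → S → A) (k : ℕ) (z : S × A)
    (g : ℕ → S) : nVisits ρ k z g ≤ k :=
  (sum_le_card_nsmul _ _ 1 fun _ _ => by split <;> omega).trans (by simp)

lemma nVisits_congr [DecidableEq S] [DecidableEq A] {ρ : ℕ → S → A} {k : ℕ} {z : S × A}
    {g g' : ℕ → S} (h : ∀ i < k, g i = g' i) : nVisits ρ k z g = nVisits ρ k z g' :=
  sum_congr rfl fun i hi => by rw [h i (mem_range.1 hi)]

lemma boole_le_boole {p q : Prop} [Decidable p] [Decidable q] (h : p → q) :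
    (if p then (1 : ℝ) else 0) ≤ if q then 1 else 0 := by
  split_ifs <;> simp_all

end Paths

section PathExpect

variable {S A : Type} [Fintype S] {P : S → A → S → ℝ}

/-- Expectation over the `k`-step path from `x` under `ρ`; the path stays at its last state
afterwards, as `extT` does. -/
noncomputable def pathExpect (P : S → A → S → ℝ) : (ℕ → S → A) → ℕ → S → ((ℕ → S) → ℝ) → ℝ
  | _, 0, x, F => F fun _ => x
  | ρ, k + 1, x, F =>
    ∑ y, P x (ρ 0 x) y * pathExpect P (fun h => ρ (h + 1)) k y fun g => F (pathCons x g)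

lemma sum_trajP_mul_eq_pathExpect (P : S → A → S → ℝ) (ρ : ℕ → S → A) (k : ℕ) (μ : S → ℝ)
    (F : (ℕ → S) → ℝ) :
    ∑ T : Fin (k + 1) → S, trajP μ P ρ k (extT k T) * F (extT k T) =
      ∑ x, μ x * pathExpect P ρ k x F := by
  induction k generalizing ρ μ F with
  | zero =>
    refine Fintype.sum_equiv (Equiv.funUnique (Fin 1) S) _ _ fun T => ?_
    simp [extT_zero, trajP, pathExpect]
  | succ k ih =>
    rw [← Fintype.sum_equiv (Fin.consEquiv fun _ => S) _ _ fun _ => rfl, Fintype.sum_prod_type]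
    refine sum_congr rfl fun x _ => ?_
    have hcons (T : Fin (k + 1) → S) : (Fin.consEquiv fun _ => S) (x, T) = Fin.cons x T := rfl
    simp only [hcons, extT_succ_cons, trajP_pathCons, mul_assoc, ← mul_sum]
    rw [ih (F := fun g => F (pathCons x g)), pathExpect]

lemma pathExpect_add (ρ : ℕ → S → A) (k : ℕ) (x : S) (F G : (ℕ → S) → ℝ) :
    pathExpect P ρ k x (fun g => F g + G g) = pathExpect P ρ k x F + pathExpect P ρ k x G := by
  induction k generalizing ρ x F G with
  | zero => rfl
  | succ k ih => simp only [pathExpect, ih, mul_add, sum_add_distrib]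

lemma pathExpect_const_mul (ρ : ℕ → S → A) (k : ℕ) (x : S) (c : ℝ) (F : (ℕ → S) → ℝ) :
    pathExpect P ρ k x (fun g => c * F g) = c * pathExpect P ρ k x F := by
  induction k generalizing ρ x F with
  | zero => rfl
  | succ k ih => simp only [pathExpect, ih, mul_sum, mul_left_comm]

lemma pathExpect_sum {ι : Type*} (s : Finset ι) (ρ : ℕ → S → A) (k : ℕ) (x : S)
    (F : ι → (ℕ → S) → ℝ) :
    pathExpect P ρ k x (fun g => ∑ i ∈ s, F i g) = ∑ i ∈ s, pathExpect P ρ k x (F i) := by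
  induction k generalizing ρ x F with
  | zero => rfl
  | succ k ih =>
    simp only [pathExpect, ih, mul_sum]
    exact sum_comm

lemma pathExpect_const (hP1 : ∀ s a, ∑ s', P s a s' = 1) (ρ : ℕ → S → A) (k : ℕ) (x : S) (c : ℝ) :
    pathExpect P ρ k x (fun _ => c) = c := by
  induction k generalizing ρ x with
  | zero => rfl
  | succ k ih => simp only [pathExpect, ih, ← sum_mul, hP1, one_mul]

lemma pathExpect_mono (hP0 : ∀ s a s', 0 ≤ P s a s') (ρ : ℕ → S → A) (k : ℕ) (x : S)
    {F G : (ℕ → S) → ℝ} (hFG : ∀ g, F g ≤ G g) :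
    pathExpect P ρ k x F ≤ pathExpect P ρ k x G := by
  induction k generalizing ρ x F G with
  | zero => exact hFG _
  | succ k ih =>
    exact sum_le_sum fun y _ => mul_le_mul_of_nonneg_left (ih _ _ fun g => hFG _) (hP0 _ _ _)

lemma pathExpect_nonneg (hP0 : ∀ s a s', 0 ≤ P s a s') (hP1 : ∀ s a, ∑ s', P s a s' = 1)
    (ρ : ℕ → S → A) (k : ℕ) (x : S) {F : (ℕ → S) → ℝ} (hF : ∀ g, 0 ≤ F g) :
    0 ≤ pathExpect P ρ k x F :=
  pathExpect_const hP1 ρ k x 0 ▸ pathExpect_mono hP0 ρ k x hF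

lemma pathExpect_add_steps (hP1 : ∀ s a, ∑ s', P s a s' = 1) (ρ : ℕ → S → A) (k n : ℕ) (x : S)
    {F : (ℕ → S) → ℝ} (hF : ∀ g g', (∀ i ≤ k, g i = g' i) → F g = F g') :
    pathExpect P ρ (k + n) x F = pathExpect P ρ k x F := by
  induction k generalizing ρ x F with
  | zero =>
    cases n with
    | zero => rfl
    | succ n =>
      have hconst : (fun g => F (pathCons x g)) = fun _ => F fun _ => x :=
        funext fun g => hF _ _ fun i hi => by simp [Nat.le_zero.1 hi]
      simp only [pathExpect, hconst, pathExpect_const hP1, ← sum_mul, hP1, one_mul]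
  | succ k ih =>
    rw [Nat.add_right_comm]
    refine sum_congr rfl fun y _ => congrArg _ (ih _ _ fun g g' hgg' => hF _ _ fun i hi => ?_)
    cases i with
    | zero => rfl
    | succ i => exact hgg' i (by omega)

section Discounted

variable {S A : Type} [DecidableEq S] [DecidableEq A]

def discountedVisits (ρ : ℕ → S → A) (γ : ℝ) (k : ℕ) (z : S × A) (g : ℕ → S) : ℝ :=
  ∑ h ∈ range k, γ ^ h * if (g h, ρ h (g h)) = z then 1 else 0

lemma discountedVisits_pathCons (ρ : ℕ → S → A) (γ : ℝ) (k : ℕ) (z : S × A) (x : S)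
    (g : ℕ → S) :
    discountedVisits ρ γ (k + 1) z (pathCons x g) =
      (if (x, ρ 0 x) = z then 1 else 0) + γ * discountedVisits (fun h => ρ (h + 1)) γ k z g := by
  simp only [discountedVisits, sum_range_succ', pathCons_succ, pathCons_zero, pow_zero, one_mul,
    mul_sum, pow_succ, mul_comm _ γ, mul_assoc]
  exact add_comm _ _

lemma pow_mul_nVisits_le_discountedVisits {γ : ℝ} (hγ0 : 0 ≤ γ) (hγ1 : γ ≤ 1)
    (ρ : ℕ → S → A) (k : ℕ) (z : S × A) (g : ℕ → S) :
    γ ^ k * nVisits ρ k z g ≤ discountedVisits ρ γ k z g := by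
  simp only [nVisits, discountedVisits, Nat.cast_sum, mul_sum]
  refine sum_le_sum fun h hh => ?_
  split
  · simpa using pow_le_pow_of_le_one hγ0 hγ1 (mem_range.1 hh).le
  · simp

lemma discountedVisits_le_nVisits {γ : ℝ} (hγ0 : 0 ≤ γ) (hγ1 : γ ≤ 1)
    (ρ : ℕ → S → A) (k : ℕ) (z : S × A) (g : ℕ → S) :
    discountedVisits ρ γ k z g ≤ nVisits ρ k z g := by
  simp only [nVisits, discountedVisits, Nat.cast_sum]
  refine sum_le_sum fun h _ => ?_
  split
  · simpa using pow_le_one₀ hγ0 hγ1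
  · simp

lemma pathExpect_discountedVisits_succ [Fintype S] {P : S → A → S → ℝ}
    (hP1 : ∀ s a, ∑ s', P s a s' = 1) (ρ : ℕ → S → A) (γ : ℝ) (k : ℕ) (z : S × A) (x : S) :
    pathExpect P ρ (k + 1) x (discountedVisits ρ γ (k + 1) z) =
      (if (x, ρ 0 x) = z then 1 else 0) +
        γ * ∑ y, P x (ρ 0 x) y *
          pathExpect P (fun h => ρ (h + 1)) k y (discountedVisits (fun h => ρ (h + 1)) γ k z) := by
  simp only [pathExpect, discountedVisits_pathCons, pathExpect_add, pathExpect_const hP1,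
    pathExpect_const_mul, mul_add, sum_add_distrib, ← sum_mul, hP1, one_mul, mul_sum]
  congr 1
  exact sum_congr rfl fun y _ => by ring

end Discounted

section OptimalValue

variable {S A : Type} [Fintype S] [DecidableEq S] [DecidableEq A] {P : S → A → S → ℝ}
  {z : S × A} {γ : ℝ} {A₀ : Finset A}

/-- Optimal `k`-step discounted value for the reward `1[(s, a) = z]`; actions are restricted to a
finite set `A₀` so that greedy actions exist. -/
noncomputable def optValue (P : S → A → S → ℝ) (z : S × A) (γ : ℝ) (A₀ : Finset A)
    (hA : A₀.Nonempty) : ℕ → S → ℝ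
  | 0, _ => 0
  | k + 1, s => A₀.sup' hA fun a =>
      (if (s, a) = z then 1 else 0) + γ * ∑ y, P s a y * optValue P z γ A₀ hA k y

lemma optValue_nonneg (hA : A₀.Nonempty) (hP0 : ∀ s a s', 0 ≤ P s a s') (hγ0 : 0 ≤ γ)
    (k : ℕ) (s : S) : 0 ≤ optValue P z γ A₀ hA k s := by
  induction k generalizing s with
  | zero => rfl
  | succ k ih =>
    obtain ⟨a, ha⟩ := hA
    refine le_trans ?_ (le_sup' _ ha)
    have := sum_nonneg fun y (_ : y ∈ univ) => mul_nonneg (hP0 s a y) (ih y)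
    positivity

lemma optValue_le_succ (hA : A₀.Nonempty) (hP0 : ∀ s a s', 0 ≤ P s a s') (hγ0 : 0 ≤ γ)
    (k : ℕ) (s : S) : optValue P z γ A₀ hA k s ≤ optValue P z γ A₀ hA (k + 1) s := by
  induction k generalizing s with
  | zero => exact optValue_nonneg hA hP0 hγ0 1 s
  | succ k ih =>
    refine sup'_mono_fun fun a _ => ?_
    gcongr with y
    · exact hP0 s a y
    · exact ih y

/-- Away from `z.1` no reward is collected in the first step, so the value is largest at `z.1`. -/
lemma optValue_le_optValue_fst (hA : A₀.Nonempty) (hP0 : ∀ s a s', 0 ≤ P s a s')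
    (hP1 : ∀ s a, ∑ s', P s a s' = 1) (hγ0 : 0 ≤ γ) (hγ1 : γ ≤ 1) (k : ℕ) (s : S) :
    optValue P z γ A₀ hA k s ≤ optValue P z γ A₀ hA k z.1 := by
  induction k generalizing s with
  | zero => rfl
  | succ k ih =>
    by_cases hs : s = z.1
    · rw [hs]
    refine sup'_le _ _ fun a _ => ?_
    have hsa : (s, a) ≠ z := fun h => hs (congrArg Prod.fst h)
    calc (if (s, a) = z then 1 else 0) + γ * ∑ y, P s a y * optValue P z γ A₀ hA k y
        ≤ 0 + 1 * ∑ y, P s a y * optValue P z γ A₀ hA k z.1 := by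
          rw [if_neg hsa]
          gcongr with y
          · exact sum_nonneg fun y _ => mul_nonneg (hP0 s a y) (optValue_nonneg hA hP0 hγ0 k y)
          · exact hP0 s a y
          · exact ih y
      _ = optValue P z γ A₀ hA k z.1 := by rw [← sum_mul, hP1]; ring
      _ ≤ optValue P z γ A₀ hA (k + 1) z.1 := optValue_le_succ hA hP0 hγ0 k z.1

lemma pathExpect_discountedVisits_le_optValue (hA : A₀.Nonempty) (hP0 : ∀ s a s', 0 ≤ P s a s')
    (hP1 : ∀ s a, ∑ s', P s a s' = 1) (hγ0 : 0 ≤ γ) (k : ℕ) (ρ : ℕ → S → A)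
    (hρ : ∀ h < k, ∀ s, ρ h s ∈ A₀) (x : S) :
    pathExpect P ρ k x (discountedVisits ρ γ k z) ≤ optValue P z γ A₀ hA k x := by
  induction k generalizing ρ x with
  | zero => simp [pathExpect, discountedVisits, optValue]
  | succ k ih =>
    rw [pathExpect_discountedVisits_succ hP1]
    refine le_trans ?_ (le_sup' _ (hρ 0 k.succ_pos x))
    gcongr with y
    · exact hP0 _ _ _
    · exact ih _ (fun h hh s => hρ (h + 1) (by omega) s) y

lemma optValue_sub_le_pathExpect_of_greedy (hA : A₀.Nonempty) (hP0 : ∀ s a s', 0 ≤ P s a s')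
    (hP1 : ∀ s a, ∑ s', P s a s' = 1) (hγ0 : 0 ≤ γ) (hγ1 : γ ≤ 1) {K : ℕ} {π : S → A}
    (hπ : ∀ s, optValue P z γ A₀ hA (K + 1) s =
      (if (s, π s) = z then 1 else 0) + γ * ∑ y, P s (π s) y * optValue P z γ A₀ hA K y)
    (k : ℕ) (s : S) :
    optValue P z γ A₀ hA K s - γ ^ k * optValue P z γ A₀ hA K z.1 ≤
      pathExpect P (fun _ => π) k s (discountedVisits (fun _ => π) γ k z) := by
  induction k generalizing s with
  | zero =>
    simpa [pathExpect, discountedVisits] using optValue_le_optValue_fst hA hP0 hP1 hγ0 hγ1 K s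
  | succ k ih =>
    set u := optValue P z γ A₀ hA K
    calc u s - γ ^ (k + 1) * u z.1
        ≤ optValue P z γ A₀ hA (K + 1) s - γ ^ (k + 1) * u z.1 := by
          linarith [optValue_le_succ (z := z) hA hP0 hγ0 K s]
      _ = (if (s, π s) = z then 1 else 0) +
            γ * ∑ y, P s (π s) y * (u y - γ ^ k * u z.1) := by
          simp only [hπ, mul_sub, sum_sub_distrib, ← sum_mul, hP1]
          ring
      _ ≤ (if (s, π s) = z then 1 else 0) + γ * ∑ y, P s (π s) y *
            pathExpect P (fun _ => π) k y (discountedVisits (fun _ => π) γ k z) := by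
          gcongr with y
          · exact hP0 _ _ _
          · exact ih y
      _ = _ := (pathExpect_discountedVisits_succ hP1 (fun _ => π) γ k z s).symm

end OptimalValue

/-- Both sides are compared with the `K`-step discounted optimal value, the stationary policy being
greedy for it. -/
theorem exists_stationary_mul_pathExpect_nVisits_le {S A : Type} [Fintype S] [DecidableEq S]
    [DecidableEq A] {P : S → A → S → ℝ} (hP0 : ∀ s a s', 0 ≤ P s a s')
    (hP1 : ∀ s a, ∑ s', P s a s' = 1) {γ : ℝ} (hγ0 : 0 ≤ γ) (hγ1 : γ ≤ 1) (z : S × A)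
    (π' : ℕ → S → A) (K T : ℕ) :
    ∃ π : S → A,
      (1 - γ ^ T) * (γ ^ K * pathExpect P π' K z.1 fun g => (nVisits π' K z g : ℝ)) ≤
        pathExpect P (fun _ => π) T z.1 fun g => (nVisits (fun _ => π) T z g : ℝ) := by
  set A₀ := insert z.2 ((range K ×ˢ univ).image fun p : ℕ × S => π' p.1 p.2)
  have hA : A₀.Nonempty := insert_nonempty _ _
  have hπ'A₀ : ∀ h < K, ∀ s, π' h s ∈ A₀ := fun h hh s =>
    mem_insert_of_mem (mem_image.2 ⟨(h, s), by simp [hh], rfl⟩)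
  have hgreedy (s : S) : ∃ a ∈ A₀, optValue P z γ A₀ hA (K + 1) s =
      (if (s, a) = z then 1 else 0) + γ * ∑ y, P s a y * optValue P z γ A₀ hA K y :=
    exists_mem_eq_sup' hA _
  choose π _ hπ using hgreedy
  refine ⟨π, ?_⟩
  have hγT : 0 ≤ 1 - γ ^ T := sub_nonneg.2 (pow_le_one₀ hγ0 hγ1)
  set u := optValue P z γ A₀ hA K
  calc (1 - γ ^ T) * (γ ^ K * pathExpect P π' K z.1 fun g => (nVisits π' K z g : ℝ))
      ≤ (1 - γ ^ T) * u z.1 := by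
        gcongr
        rw [← pathExpect_const_mul]
        exact (pathExpect_mono hP0 _ _ _ (pow_mul_nVisits_le_discountedVisits hγ0 hγ1 _ _ z)).trans
          (pathExpect_discountedVisits_le_optValue hA hP0 hP1 hγ0 K π' hπ'A₀ z.1)
    _ = u z.1 - γ ^ T * u z.1 := by ring
    _ ≤ pathExpect P (fun _ => π) T z.1 (discountedVisits (fun _ => π) γ T z) :=
        optValue_sub_le_pathExpect_of_greedy hA hP0 hP1 hγ0 hγ1 hπ T z.1
    _ ≤ _ := pathExpect_mono hP0 _ _ _ (discountedVisits_le_nVisits hγ0 hγ1 _ _ z)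

section VisitTail

variable {S A : Type} [Fintype S] [DecidableEq S] [DecidableEq A] {P : S → A → S → ℝ}
  {π : S → A} {z : S × A}

noncomputable def visitTail (P : S → A → S → ℝ) (π : S → A) (z : S × A) (k : ℕ) (x : S)
    (j : ℕ) : ℝ :=
  pathExpect P (fun _ => π) k x fun g => if j ≤ nVisits (fun _ => π) k z g then 1 else 0

lemma visitTail_zero_steps (x : S) (j : ℕ) :
    visitTail P π z 0 x j = if j = 0 then 1 else 0 := by
  simp [visitTail, pathExpect, nVisits]

lemma visitTail_zero (hP1 : ∀ s a, ∑ s', P s a s' = 1) (k : ℕ) (x : S) :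
    visitTail P π z k x 0 = 1 := by
  simp [visitTail, pathExpect_const hP1]

lemma visitTail_succ (k : ℕ) (x : S) (j : ℕ) :
    visitTail P π z (k + 1) x j =
      ∑ y, P x (π x) y * visitTail P π z k y (j - if (x, π x) = z then 1 else 0) := by
  simp only [visitTail, pathExpect, nVisits_pathCons, Nat.sub_le_iff_le_add']

lemma visitTail_nonneg (hP0 : ∀ s a s', 0 ≤ P s a s') (hP1 : ∀ s a, ∑ s', P s a s' = 1)
    (k : ℕ) (x : S) (j : ℕ) : 0 ≤ visitTail P π z k x j :=
  pathExpect_nonneg hP0 hP1 _ _ _ fun _ => by positivity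

lemma visitTail_anti (hP0 : ∀ s a s', 0 ≤ P s a s') (k : ℕ) (x : S) {j j' : ℕ} (hj : j ≤ j') :
    visitTail P π z k x j' ≤ visitTail P π z k x j :=
  pathExpect_mono hP0 _ _ _ fun _ => boole_le_boole hj.trans

lemma visitTail_le_succ (hP0 : ∀ s a s', 0 ≤ P s a s') (hP1 : ∀ s a, ∑ s', P s a s' = 1)
    (k : ℕ) (x : S) (j : ℕ) : visitTail P π z k x j ≤ visitTail P π z (k + 1) x j := by
  rw [visitTail, ← pathExpect_add_steps hP1 _ k 1]
  · refine pathExpect_mono hP0 _ _ _ fun g => ?_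
    refine boole_le_boole fun h => h.trans ?_
    simp only [nVisits, sum_range_succ]
    omega
  · exact fun g g' hgg' => by rw [nVisits_congr fun i hi => hgg' i hi.le]

lemma visitTail_le_visitTail_fst (hP0 : ∀ s a s', 0 ≤ P s a s')
    (hP1 : ∀ s a, ∑ s', P s a s' = 1) (k : ℕ) (x : S) (j : ℕ) :
    visitTail P π z k x j ≤ visitTail P π z k z.1 j := by
  induction k generalizing x with
  | zero => simp [visitTail_zero_steps]
  | succ k ih =>
    by_cases hx : x = z.1
    · rw [hx]
    have hxz : (x, π x) ≠ z := fun h => hx (congrArg Prod.fst h)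
    calc visitTail P π z (k + 1) x j
        ≤ ∑ y, P x (π x) y * visitTail P π z k z.1 j := by
          rw [visitTail_succ, if_neg hxz, Nat.sub_zero]
          gcongr with y
          · exact hP0 _ _ _
          · exact ih y
      _ = visitTail P π z k z.1 j := by rw [← sum_mul, hP1, one_mul]
      _ ≤ visitTail P π z (k + 1) z.1 j := visitTail_le_succ hP0 hP1 k z.1 j

/-- After its `c`-th visit the chain is at `z.1`, so reaching `d` further visits is at most as
likely as reaching `d` visits from `z.1`. -/
lemma visitTail_add_le_mul (hP0 : ∀ s a s', 0 ≤ P s a s') (hP1 : ∀ s a, ∑ s', P s a s' = 1)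
    (k : ℕ) (x : S) {c : ℕ} (hc : 1 ≤ c) (d : ℕ) :
    visitTail P π z k x (c + d) ≤ visitTail P π z k x c * visitTail P π z k z.1 d := by
  induction k generalizing x c with
  | zero =>
    rw [visitTail_zero_steps, if_neg (by omega)]
    exact mul_nonneg (visitTail_nonneg hP0 hP1 _ _ _) (visitTail_nonneg hP0 hP1 _ _ _)
  | succ k ih =>
    set ι := if (x, π x) = z then 1 else 0
    have hι : ι ≤ 1 := by unfold ι; split <;> omega
    rw [visitTail_succ, visitTail_succ]
    rcases Nat.eq_zero_or_pos (c - ι) with hcι | hcι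
    · rw [hcι, show c + d - ι = d by omega]
      simp only [visitTail_zero hP1, mul_one, hP1, one_mul]
      calc ∑ y, P x (π x) y * visitTail P π z k y d
          ≤ ∑ y, P x (π x) y * visitTail P π z k z.1 d := by
            gcongr with y
            · exact hP0 _ _ _
            · exact visitTail_le_visitTail_fst hP0 hP1 k y d
        _ = visitTail P π z k z.1 d := by rw [← sum_mul, hP1, one_mul]
        _ ≤ visitTail P π z (k + 1) z.1 d := visitTail_le_succ hP0 hP1 k z.1 d
    · rw [show c + d - ι = c - ι + d by omega, sum_mul]
      refine sum_le_sum fun y _ => ?_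
      rw [mul_assoc]
      refine mul_le_mul_of_nonneg_left ((ih y hcι).trans ?_) (hP0 _ _ _)
      exact mul_le_mul_of_nonneg_left (visitTail_le_succ hP0 hP1 k z.1 d)
        (visitTail_nonneg hP0 hP1 _ _ _)

lemma natCast_eq_sum_boole {N k : ℕ} (hN : N ≤ k) :
    (N : ℝ) = ∑ j ∈ range k, if j + 1 ≤ N then 1 else 0 := by
  have hlow : ∀ j ∈ range N, (if j + 1 ≤ N then (1 : ℝ) else 0) = 1 :=
    fun j hj => if_pos (mem_range.1 hj)
  have hhigh : ∀ j ∈ Ico N k, (if j + 1 ≤ N then (1 : ℝ) else 0) = 0 :=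
    fun j hj => if_neg (by simp at hj; omega)
  rw [← sum_range_add_sum_Ico _ hN, sum_congr rfl hlow, sum_congr rfl hhigh]
  simp

lemma pathExpect_nVisits_eq_sum_visitTail (k : ℕ) (x : S) :
    pathExpect P (fun _ => π) k x (fun g => (nVisits (fun _ => π) k z g : ℝ)) =
      ∑ j ∈ range k, visitTail P π z k x (j + 1) := by
  simp only [visitTail]
  rw [← pathExpect_sum]
  congr 1
  funext g
  exact natCast_eq_sum_boole (nVisits_le _ _ _ _)

lemma visitTail_le_one (hP0 : ∀ s a s', 0 ≤ P s a s') (hP1 : ∀ s a, ∑ s', P s a s' = 1)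
    (k : ℕ) (x : S) (j : ℕ) : visitTail P π z k x j ≤ 1 :=
  visitTail_zero (π := π) (z := z) hP1 k x ▸ visitTail_anti hP0 k x j.zero_le

/-- Visits beyond the `m`-th happen only after a return to `z.1`, with probability
`visitTail … m`, after which the chain starts afresh. -/
lemma pathExpect_nVisits_le (hP0 : ∀ s a s', 0 ≤ P s a s') (hP1 : ∀ s a, ∑ s', P s a s' = 1)
    (k : ℕ) {m : ℕ} (hm : 1 ≤ m) :
    pathExpect P (fun _ => π) k z.1 (fun g => (nVisits (fun _ => π) k z g : ℝ)) ≤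
      m + visitTail P π z k z.1 m *
        pathExpect P (fun _ => π) k z.1 (fun g => (nVisits (fun _ => π) k z g : ℝ)) := by
  simp only [pathExpect_nVisits_eq_sum_visitTail]
  set q := visitTail P π z k z.1 m
  have hq : 0 ≤ q := visitTail_nonneg hP0 hP1 _ _ _
  have hB (j : ℕ) := visitTail_nonneg (π := π) (z := z) hP0 hP1 k z.1 j
  have hsum_le (n : ℕ) : ∑ j ∈ range n, visitTail P π z k z.1 (j + 1) ≤ n := by
    simpa using sum_le_sum fun j (_ : j ∈ range n) => visitTail_le_one hP0 hP1 k z.1 (j + 1)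
  rcases le_total k m with hkm | hmk
  · have := mul_nonneg hq (sum_nonneg fun j (_ : j ∈ range k) => hB (j + 1))
    have : (k : ℝ) ≤ m := by exact_mod_cast hkm
    linarith [hsum_le k]
  have hsplit : ∑ j ∈ range k, visitTail P π z k z.1 (j + 1) =
      ∑ j ∈ range m, visitTail P π z k z.1 (j + 1) +
        ∑ i ∈ range (k - m), visitTail P π z k z.1 (m + i + 1) := by
    rw [← sum_range_add_sum_Ico _ hmk, sum_Ico_eq_sum_range]
  set E := ∑ j ∈ range k, visitTail P π z k z.1 (j + 1)
  rw [hsplit]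
  refine add_le_add (hsum_le m) ?_
  calc ∑ i ∈ range (k - m), visitTail P π z k z.1 (m + i + 1)
      ≤ ∑ i ∈ range (k - m), q * visitTail P π z k z.1 (i + 1) :=
        sum_le_sum fun i _ => visitTail_add_le_mul hP0 hP1 k z.1 hm (i + 1)
    _ ≤ q * E := by
        rw [← mul_sum]
        exact mul_le_mul_of_nonneg_left (sum_le_sum_of_subset_of_nonneg
          (range_subset_range.2 (Nat.sub_le k m)) fun j _ _ => hB (j + 1)) hq
    _ = _ := by rw [← hsplit]

lemma half_le_visitTail_of_lt_pathExpect (hP0 : ∀ s a s', 0 ≤ P s a s')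
    (hP1 : ∀ s a, ∑ s', P s a s' = 1) (k m : ℕ)
    (h : 2 * m < pathExpect P (fun _ => π) k z.1 fun g => (nVisits (fun _ => π) k z g : ℝ)) :
    1 / 2 ≤ visitTail P π z k z.1 m := by
  by_contra! hq
  have hm : 1 ≤ m := by
    by_contra! hm0
    rw [Nat.lt_one_iff.1 hm0, visitTail_zero hP1] at hq
    norm_num at hq
  have hE := pathExpect_nonneg hP0 hP1 (fun _ => π) k z.1 fun g =>
    (nVisits (fun _ => π) k z g).cast_nonneg
  nlinarith [pathExpect_nVisits_le (π := π) (z := z) hP0 hP1 k hm]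

end VisitTail

section Quantile

variable {S A : Type} [Fintype S] {P : S → A → S → ℝ}

noncomputable def pathQuantile (P : S → A → S → ℝ) (ρ : ℕ → S → A) (H : ℕ) (x₀ : S)
    (X : (ℕ → S) → ℝ) (d : ℝ) : ℝ :=
  sSup {x : ℝ | d ≤ pathExpect P ρ H x₀ fun g => if x ≤ X g then 1 else 0}

lemma quantNS_eq_pathQuantile [DecidableEq S] {μ : S → ℝ} {x₀ : S}
    (hμ : ∀ s, μ s = if s = x₀ then 1 else 0) (ρ : ℕ → S → A) (H : ℕ) (X : (ℕ → S) → ℝ)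
    (d : ℝ) : quantNS μ P ρ H X d = pathQuantile P ρ H x₀ X d := by
  have hprob (x : ℝ) : ∑ T : Fin (H + 1) → S,
      (if x ≤ X (extT H T) then trajP μ P ρ H (extT H T) else 0) =
        pathExpect P ρ H x₀ fun g => if x ≤ X g then 1 else 0 := by
    rw [sum_congr rfl fun T _ => (mul_boole _ _).symm,
      sum_trajP_mul_eq_pathExpect P ρ H μ fun g => if x ≤ X g then 1 else 0]
    simp [hμ]
  simp only [quantNS, pathQuantile, hprob]

lemma le_pathExpect_of_le_pathQuantile (hP0 : ∀ s a s', 0 ≤ P s a s') {ρ : ℕ → S → A} {H : ℕ}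
    {x₀ : S} {X : (ℕ → S) → ℕ} {d : ℝ} {f : ℕ} (hf : 0 < f)
    (h : (f : ℝ) ≤ pathQuantile P ρ H x₀ (fun g => X g) d) :
    d ≤ pathExpect P ρ H x₀ fun g => if f ≤ X g then 1 else 0 := by
  have hne : {x : ℝ | d ≤ pathExpect P ρ H x₀ fun g => if x ≤ X g then 1 else 0}.Nonempty := by
    by_contra hempty
    rw [Set.not_nonempty_iff_eq_empty] at hempty
    rw [pathQuantile, hempty, Real.sSup_empty] at h
    exact (Nat.cast_pos.2 hf).not_ge h
  obtain ⟨x, hx, hfx⟩ := exists_lt_of_lt_csSup hne ((sub_one_lt (f : ℝ)).trans_le h)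
  refine hx.trans (pathExpect_mono hP0 _ _ _ fun g => boole_le_boole fun hxg => ?_)
  have : (f : ℝ) < X g + 1 := by linarith
  exact Nat.lt_succ_iff.1 (by exact_mod_cast this)

lemma mul_le_pathExpect_of_le_pathQuantile (hP0 : ∀ s a s', 0 ≤ P s a s') {ρ : ℕ → S → A}
    {H : ℕ} {x₀ : S} {X : (ℕ → S) → ℕ} {d : ℝ} {f : ℕ} (hf : 0 < f)
    (h : (f : ℝ) ≤ pathQuantile P ρ H x₀ (fun g => X g) d) :
    d * f ≤ pathExpect P ρ H x₀ fun g => (X g : ℝ) :=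
  calc d * f ≤ (pathExpect P ρ H x₀ fun g => if f ≤ X g then 1 else 0) * f :=
        mul_le_mul_of_nonneg_right (le_pathExpect_of_le_pathQuantile hP0 hf h) f.cast_nonneg
    _ = pathExpect P ρ H x₀ fun g => f * if f ≤ X g then 1 else 0 := by
        rw [pathExpect_const_mul, mul_comm]
    _ ≤ pathExpect P ρ H x₀ fun g => (X g : ℝ) :=
        pathExpect_mono hP0 _ _ _ fun g => by
          split_ifs with hfg
          · simpa using hfg
          · simp

lemma le_pathQuantile (hP1 : ∀ s a, ∑ s', P s a s' = 1) {ρ : ℕ → S → A} {H : ℕ} {x₀ : S}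
    {X : (ℕ → S) → ℝ} {C : ℝ} (hX : ∀ g, X g ≤ C) {d : ℝ} (hd : 0 < d) {x : ℝ}
    (h : d ≤ pathExpect P ρ H x₀ fun g => if x ≤ X g then 1 else 0) :
    x ≤ pathQuantile P ρ H x₀ X d := by
  refine le_csSup ⟨C, fun y hy => ?_⟩ h
  by_contra! hCy
  have hzero : (fun g => if y ≤ X g then (1 : ℝ) else 0) = fun _ => 0 :=
    funext fun g => if_neg (by linarith [hX g])
  rw [Set.mem_ofPred_eq, hzero, pathExpect_const hP1] at hy
  linarith

lemma pathExpect_le_nVisits_eq_visitTail [DecidableEq S] [DecidableEq A]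
    (hP1 : ∀ s a, ∑ s', P s a s' = 1) {T H : ℕ} (hTH : T ≤ H) (π : S → A) (z : S × A) (x : S)
    (m : ℕ) :
    (pathExpect P (fun _ => π) H x fun g =>
      if (m : ℝ) ≤ (nVisits (fun _ => π) T z g : ℝ) then 1 else 0) = visitTail P π z T x m := by
  obtain ⟨n, rfl⟩ := Nat.exists_eq_add_of_le hTH
  simp only [Nat.cast_le]
  exact pathExpect_add_steps hP1 _ T n x fun g g' hgg' => by
    rw [nVisits_congr fun i hi => hgg' i hi.le]

end Quantile

lemma exists_pow_eq_half {T H : ℕ} (hT : 1 ≤ T) (hH : H ≤ 2 * T + 1) :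
    ∃ γ : ℝ, 0 ≤ γ ∧ γ ≤ 1 ∧ γ ^ T = 1 / 2 ∧ 1 / 8 ≤ γ ^ H := by
  set γ : ℝ := (1 / 2) ^ (1 / T : ℝ)
  have hγ0 : 0 ≤ γ := by positivity
  have hγ1 : γ ≤ 1 := Real.rpow_le_one (by norm_num) (by norm_num) (by positivity)
  have hγT : γ ^ T = 1 / 2 := by
    rw [← Real.rpow_natCast, ← Real.rpow_mul (by norm_num),
      one_div_mul_cancel (by positivity), Real.rpow_one]
  have hγ : 1 / 2 ≤ γ := hγT ▸ pow_le_of_le_one hγ0 hγ1 (by omega)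
  refine ⟨γ, hγ0, hγ1, hγT, ?_⟩
  calc (1 : ℝ) / 8 ≤ γ ^ T * γ ^ T * γ := by rw [hγT]; linarith
    _ = γ ^ (2 * T + 1) := by ring
    _ ≤ γ ^ H := pow_le_pow_of_le_one hγ0 hγ1 hH

theorem stmt8_general {S A : Type} [Fintype S] [DecidableEq S] [DecidableEq A]
    (μ : S → ℝ) (P : S → A → S → ℝ) (H : ℕ)
    (hP0 : ∀ s a s', 0 ≤ P s a s') (hP1 : ∀ s a, ∑ s', P s a s' = 1)
    (z : S × A)
    (hμz : ∀ s, μ s = if s = z.1 then 1 else 0)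
    (ε : ℝ) (hε1 : ε ≤ 1)
    (f : ℕ) (hf : f ≤ H)
    (π' : ℕ → S → A)
    (hq : (f : ℝ) ≤ quantNS μ P π' H (fun g => (nVisits π' H z g : ℝ)) ε) :
    ∃ π : S → A,
      (⌊(1 / (2048 * (Fintype.card S : ℝ) ^ (12 * Fintype.card S))) * ε * f⌋₊ : ℝ) ≤
        quantNS μ P (fun _ => π) H
          (fun g => (nVisits (fun _ => π) (H / 2) z g : ℝ)) (1 / 2) := by
  set m := ⌊(1 / (2048 * (Fintype.card S : ℝ) ^ (12 * Fintype.card S))) * ε * f⌋₊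
  suffices ∃ π : S → A, 1 / 2 ≤ visitTail P π z (H / 2) z.1 m by
    obtain ⟨π, hπ⟩ := this
    refine ⟨π, ?_⟩
    rw [quantNS_eq_pathQuantile hμz]
    refine le_pathQuantile hP1 (fun g => Nat.cast_le.2 (nVisits_le _ _ _ g)) one_half_pos ?_
    rwa [pathExpect_le_nVisits_eq_visitTail hP1 (Nat.div_le_self H 2)]
  rcases Nat.eq_zero_or_pos m with hm | hm
  · exact ⟨fun _ => z.2, by rw [hm, visitTail_zero hP1]; norm_num⟩
  have hmεf : (m : ℝ) * 2048 ≤ ε * f := by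
    have hp : (1 : ℝ) ≤ (Fintype.card S : ℝ) ^ (12 * Fintype.card S) :=
      one_le_pow₀ (by exact_mod_cast Fintype.card_pos_iff.2 ⟨z.1⟩)
    have := (Nat.le_floor_iff' hm.ne').1 le_rfl
    rw [one_div_mul_eq_div, div_mul_eq_mul_div, le_div_iff₀ (by positivity)] at this
    nlinarith [(Nat.one_le_cast (α := ℝ)).2 hm]
  have hfN : 2048 ≤ f := by
    exact_mod_cast (show (2048 : ℝ) ≤ f by
      nlinarith [(Nat.one_le_cast (α := ℝ)).2 hm, mul_nonneg (sub_nonneg.2 hε1) f.cast_nonneg])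
  have hT : 1 ≤ H / 2 := by omega
  obtain ⟨γ, hγ0, hγ1, hγT, hγH⟩ := exists_pow_eq_half hT (by omega : H ≤ 2 * (H / 2) + 1)
  obtain ⟨π, hπ⟩ := exists_stationary_mul_pathExpect_nVisits_le hP0 hP1 hγ0 hγ1 z π' H (H / 2)
  have hE' := mul_le_pathExpect_of_le_pathQuantile hP0 (by omega : 0 < f)
    (quantNS_eq_pathQuantile hμz π' H _ ε ▸ hq)
  have hE'0 := pathExpect_nonneg hP0 hP1 π' H z.1 fun g => (nVisits π' H z g).cast_nonneg
  refine ⟨π, half_le_visitTail_of_lt_pathExpect hP0 hP1 _ _ ?_⟩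
  rw [hγT] at hπ
  nlinarith [mul_le_mul_of_nonneg_right hγH hE'0, (Nat.one_le_cast (α := ℝ)).2 hm]

theorem stmt8 {S A : Type} [Fintype S] [DecidableEq S] [DecidableEq A]
    (μ : S → ℝ) (P : S → A → S → ℝ) (H : ℕ)
    (hμ0 : ∀ s, 0 ≤ μ s) (hμ1 : ∑ s, μ s = 1)
    (hP0 : ∀ s a s', 0 ≤ P s a s') (hP1 : ∀ s a, ∑ s', P s a s' = 1)
    (z : S × A)
    (hμz : ∀ s, μ s = if s = z.1 then 1 else 0)
    (hH : 2 * Real.log (8 * (Fintype.card S : ℝ) ^ (4 * Fintype.card S)) ≤ (H : ℝ))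
    (ε : ℝ) (hε0 : 0 < ε) (hε1 : ε ≤ 1)
    (f : ℕ) (hf : f ≤ H)
    (π' : ℕ → S → A)
    (hq : (f : ℝ) ≤ quantNS μ P π' H (fun g => (nVisits π' H z g : ℝ)) ε) :
    ∃ π : S → A,
      (⌊(1 / (2048 * (Fintype.card S : ℝ) ^ (12 * Fintype.card S))) * ε * f⌋₊ : ℝ) ≤
        quantNS μ P (fun _ => π) H
          (fun g => (nVisits (fun _ => π) (H / 2) z g : ℝ)) (1 / 2) :=
  stmt8_general μ P H hP0 hP1 z hμz ε hε1 f hf π' hq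
end PathExpect
end

section
/- Let M = (S, A, P, R, H, μ) be a finite MDP satisfying the bounded total reward assumption, with H ≥ |S|. For any (s, a) ∈ S × A, if there exists a (possibly non-stationary) deterministic policy π such that, for the random trajectory (s_0, a_0, r_0), …, (s_{H−1}, a_{H−1}, r_{H−1}), s_H induced by executing π in M, Pr[Σ_{h=0}^{H−1} 1[(s_h, a_h) = (s, a)] > 1] ≥ ε for some ε > 0, then the reward R(s, a) is at most 2|S|/H almost surely, and consequently E[(R(s, a))²] ≤ 4|S|²/H². -/
/-!
A second visit to `(s, a)` closes a loop through `(s, a)`. Erasing inner loops shortens this loop,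
and the path leading to it, to at most `|S|` steps each, so a suitable non-stationary policy runs
around the loop and, on a trajectory of positive probability, collects independent copies of
`R(s, a)` at least `H / (2|S|)` times. Since these rewards are nonnegative and sum to at most `1`,
one of them is at most `2|S| / H`, and the product structure of the reward law turns this into an
almost sure bound on `R(s, a)` itself.
-/

open Finset MeasureTheory

/-- For `k < m`, the step of `g ∘ σ` out of `g (σ k)` is the step of `g` out of `g (σ k)`;
so if `g` is a walk, so is `g ∘ σ`, with the actions read off at the times `σ k`. -/
def IsShortcut {α : Type*} (g : ℕ → α) (m : ℕ) (σ : ℕ → ℕ) : Prop :=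
  ∀ k < m, g (σ (k + 1)) = g (σ k + 1)

section Shortcut

variable {α : Type*} {g : ℕ → α}

theorem IsShortcut.comp {M m : ℕ} {τ σ : ℕ → ℕ} (hτ : IsShortcut g M τ)
    (hσ : IsShortcut (g ∘ τ) m σ) (hσM : ∀ k < m, σ k < M) : IsShortcut g m (τ ∘ σ) :=
  fun k hk => (hσ k hk).trans (hτ _ (hσM k hk))

theorem isShortcut_skip {i j : ℕ} (hij : i ≤ j) (hg : g i = g j) (M : ℕ) :
    IsShortcut g M (fun k => if k < i then k else k + (j - i)) := by
  intro k _
  rcases lt_trichotomy (k + 1) i with h | rfl | h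
  · simp [h, show k < i by omega]
  · simp [hg, Nat.add_sub_cancel' hij]
  · simp only [if_neg (show ¬k + 1 < i by omega), if_neg (show ¬k < i by omega)]
    congr 1
    omega

/-- Loop erasure, cutting only loops that start after time `0` so that the first step is kept. -/
theorem exists_isShortcut_le_card [Fintype α] (g : ℕ → α) (n : ℕ) :
    ∃ m σ, m ≤ n ∧ m ≤ Fintype.card α ∧ σ 0 = 0 ∧ σ m = n ∧ (∀ k < m, σ k < n) ∧
      IsShortcut g m σ := by
  induction n using Nat.strong_induction_on generalizing g with
  | _ n ih =>
  by_cases hn : n ≤ Fintype.card α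
  · exact ⟨n, id, le_rfl, hn, rfl, rfl, fun _ hk => hk, fun _ _ => rfl⟩
  obtain ⟨i, j, hi, hij, hjn, hg⟩ : ∃ i j, 0 < i ∧ i < j ∧ j ≤ n ∧ g i = g j := by
    obtain ⟨k, l, hkl, hg⟩ :=
      Fintype.exists_ne_map_eq_of_card_lt (fun k : Fin n => g (k + 1)) (by simp; omega)
    rcases Fin.lt_or_lt_of_ne hkl with h | h
    · exact ⟨k + 1, l + 1, by omega, by omega, by omega, hg⟩
    · exact ⟨l + 1, k + 1, by omega, by omega, by omega, hg.symm⟩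
  set τ : ℕ → ℕ := fun k => if k < i then k else k + (j - i)
  obtain ⟨m, σ, hmn, hm, hσ0, hσm, hσlt, hσ⟩ := ih (n - (j - i)) (by omega) (g ∘ τ)
  refine ⟨m, τ ∘ σ, by omega, hm, by simp [τ, hσ0, hi], ?_, fun k hk => ?_,
    (isShortcut_skip hij.le hg _).comp hσ hσlt⟩
  · simp only [Function.comp, hσm, τ, if_neg (show ¬n - (j - i) < i by omega)]
    omega
  · have := hσlt k hk
    simp only [Function.comp, τ]
    split_ifs <;> omega

/-- `ρ` runs through the shortened path from `0` to `h₁`, then forever around the shortened loop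
from `h₁` to `h₂`. -/
theorem exists_periodic_shortcut [Fintype α] {h₁ h₂ : ℕ} (h12 : h₁ < h₂) (hg : g h₁ = g h₂) :
    ∃ (p L : ℕ) (ρ : ℕ → ℕ), p ≤ h₁ ∧ p ≤ Fintype.card α ∧ 0 < L ∧ L ≤ Fintype.card α ∧ ρ 0 = 0 ∧
      (∀ t, ρ t < h₂) ∧ (∀ m, ρ (p + m * L) = h₁) ∧ ∀ M, IsShortcut g M ρ := by
  obtain ⟨p, σ, hp, hpα, hσ0, hσp, hσlt, hσ⟩ := exists_isShortcut_le_card g h₁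
  obtain ⟨L, τ, -, hLα, hτ0, hτL, hτlt, hτ⟩ :=
    exists_isShortcut_le_card (fun k => g (h₁ + k)) (h₂ - h₁)
  have hL : 0 < L := Nat.pos_of_ne_zero fun h => by subst h; omega
  refine ⟨p, L, fun t => if t < p then σ t else h₁ + τ ((t - p) % L), hp, hpα, hL, hLα,
    ?_, fun t => ?_, fun m => by simp [hτ0], fun M t _ => ?_⟩
  · rcases Nat.eq_zero_or_pos p with rfl | hp0
    · simp [hτ0, ← hσp, hσ0]
    · simp [hp0, hσ0]
  · dsimp only
    split_ifs with ht
    · exact (hσlt t ht).trans h12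
    · have := hτlt _ (Nat.mod_lt (t - p) hL); omega
  rcases lt_trichotomy (t + 1) p with ht | rfl | ht
  · simp only [if_pos ht, if_pos (show t < p by omega)]
    exact hσ t (by omega)
  · simp only [lt_irrefl, if_false, Nat.sub_self, Nat.zero_mod, hτ0, add_zero,
      if_pos (Nat.lt_succ_self t)]
    rw [← hσ t (Nat.lt_succ_self t), hσp]
  · simp only [if_neg (show ¬t + 1 < p by omega), if_neg (show ¬t < p by omega),
      show t + 1 - p = t - p + 1 by omega]
    have hr : (t - p) % L < L := Nat.mod_lt _ hL
    rw [add_assoc, ← Nat.mod_add_mod]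
    generalize (t - p) % L = r at hr ⊢
    rw [← show g (h₁ + τ (r + 1)) = g (h₁ + (τ r + 1)) from hτ r hr]
    rcases (show r + 1 ≤ L from hr).lt_or_eq with hr' | hr'
    · rw [Nat.mod_eq_of_lt hr']
    · rw [hr', Nat.mod_self, hτ0, hτL, add_zero, Nat.add_sub_cancel' h12.le, hg]

end Shortcut

theorem exists_progression_finset {H p L : ℕ} (hp : p < H) (hL : 0 < L) :
    ∃ V : Finset (Fin H), (∀ j ∈ V, ∃ m, (j : ℕ) = p + m * L) ∧ H ≤ p + L * #V := by
  obtain ⟨K, hK⟩ : ∃ K, K = (H - 1 - p) / L + 1 := ⟨_, rfl⟩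
  have hlt (m : Fin K) : p + m * L < H := by
    have hm : (m : ℕ) ≤ (H - 1 - p) / L := Nat.lt_succ_iff.1 (hK ▸ m.isLt)
    have := (Nat.le_div_iff_mul_le hL).1 hm
    omega
  have hinj : Function.Injective fun m : Fin K => (⟨p + m * L, hlt m⟩ : Fin H) := by
    intro m m' h
    simpa [Fin.ext_iff, hL.ne'] using h
  refine ⟨univ.image fun m : Fin K => ⟨p + m * L, hlt m⟩, ?_, ?_⟩
  · simp only [mem_image, mem_univ, true_and]
    rintro _ ⟨m, rfl⟩
    exact ⟨m, rfl⟩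
  · rw [card_image_of_injective _ hinj, card_univ, Fintype.card_fin]
    have := hK ▸ Nat.lt_mul_div_succ (H - 1 - p) hL
    omega

theorem exists_mem_le_inv_card {ι : Type*} [Fintype ι] {x : ι → ℝ} {V : Finset ι}
    (hV : V.Nonempty) (hx : ∀ i, 0 ≤ x i) (hsum : ∑ i, x i ≤ 1) : ∃ i ∈ V, x i ≤ 1 / #V := by
  refine exists_le_of_sum_le hV ?_
  calc ∑ i ∈ V, x i ≤ ∑ i, x i := sum_le_univ_sum_of_nonneg hx
    _ ≤ ∑ _ ∈ V, 1 / (#V : ℝ) := by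
      rw [sum_const, nsmul_eq_mul, mul_one_div_cancel (by exact_mod_cast hV.card_ne_zero)]
      exact hsum

/-- Otherwise all coordinates in `V` would fail `q` simultaneously, with probability
`ν {¬q} ^ #V > 0`. -/
theorem ae_of_ae_pi_exists {ι α : Type*} [Fintype ι] [MeasurableSpace α]
    {μs : ι → Measure α} [∀ i, IsProbabilityMeasure (μs i)] {ν : Measure α} {V : Finset ι}
    (hV : V.Nonempty) (hμs : ∀ i ∈ V, μs i = ν) {q : α → Prop}
    (h : ∀ᵐ x ∂Measure.pi μs, ∃ i ∈ V, q (x i)) : ∀ᵐ y ∂ν, q y := by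
  rw [ae_iff] at h ⊢
  have hsub : (V : Set ι).pi (fun _ => {y | ¬q y}) ⊆ {x | ¬∃ i ∈ V, q (x i)} :=
    fun x hx ⟨i, hi, hq⟩ => hx i hi hq
  have hnull := measure_mono_null hsub h
  rw [Measure.pi_pi_finset, prod_congr rfl fun i hi => by rw [hμs i hi], prod_const] at hnull
  exact (pow_eq_zero_iff hV.card_ne_zero).1 hnull

theorem integral_sq_le_sq_of_ae_le {ν : Measure ℝ} [IsProbabilityMeasure ν] {c : ℝ}
    (h : ∀ᵐ y ∂ν, 0 ≤ y ∧ y ≤ c) : ∫ y, y ^ 2 ∂ν ≤ c ^ 2 :=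
  calc ∫ y, y ^ 2 ∂ν ≤ ∫ _, c ^ 2 ∂ν :=
        integral_mono_of_nonneg (ae_of_all _ fun y => sq_nonneg y) (integrable_const _)
          (h.mono fun y hy => pow_le_pow_left₀ hy.1 hy.2 2)
    _ = c ^ 2 := by simp

section Trajectory

variable {S A : Type} {μ : S → ℝ} {P : S → A → S → ℝ} {π : ℕ → S → A} {H : ℕ}

theorem extT_of_le (g : ℕ → S) {n : ℕ} (hn : n ≤ H) : extT H (fun i => g i) n = g n := by
  simp [extT, min_eq_left hn]

theorem trajP_congr {f f' : ℕ → S} (h : ∀ n ≤ H, f n = f' n) :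
    trajP μ P π H f = trajP μ P π H f' := by
  unfold trajP
  rw [h 0 (Nat.zero_le H)]
  refine congrArg _ (prod_congr rfl fun k hk => ?_)
  have hk := mem_range.1 hk
  rw [h k hk.le, h (k + 1) hk]

theorem trajP_pos_iff (hP0 : ∀ s a s', 0 ≤ P s a s') {f : ℕ → S} :
    0 < trajP μ P π H f ↔ 0 < μ (f 0) ∧ ∀ h < H, 0 < P (f h) (π h (f h)) (f (h + 1)) := by
  refine ⟨fun hpos => ?_, fun ⟨hμ, hP⟩ => mul_pos hμ (prod_pos fun h hh => hP h (mem_range.1 hh))⟩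
  have hprod := prod_nonneg fun h (_ : h ∈ range H) => hP0 (f h) (π h (f h)) (f (h + 1))
  have hμ : 0 < μ (f 0) := pos_of_mul_pos_left hpos hprod
  have hprod_pos := pos_of_mul_pos_right hpos hμ.le
  exact ⟨hμ, fun h hh => (hP0 _ _ _).lt_of_ne fun h0 =>
    hprod_pos.ne' (prod_eq_zero (mem_range.2 hh) h0.symm)⟩

theorem trajP_comp_pos (hP0 : ∀ s a s', 0 ≤ P s a s') {f : ℕ → S}
    (hpos : 0 < trajP μ P π H f) {ρ : ℕ → ℕ} (hρ0 : ρ 0 = 0) (hρH : ∀ t < H, ρ t < H)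
    (hρ : IsShortcut f H ρ) :
    0 < trajP μ P (fun t _ => π (ρ t) (f (ρ t))) H (f ∘ ρ) := by
  rw [trajP_pos_iff hP0] at hpos ⊢
  refine ⟨by simpa [hρ0] using hpos.1, fun t ht => ?_⟩
  simpa only [Function.comp, hρ t ht] using hpos.2 _ (hρH t ht)

theorem exists_lt_of_one_lt_nVisits [DecidableEq S] [DecidableEq A] {z : S × A} {f : ℕ → S}
    (h : 1 < nVisits π H z f) :
    ∃ h₁ h₂, h₁ < h₂ ∧ h₂ < H ∧ (f h₁, π h₁ (f h₁)) = z ∧ (f h₂, π h₂ (f h₂)) = z := by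
  rw [nVisits, ← card_filter] at h
  obtain ⟨x, hx, y, hy, hxy⟩ := one_lt_card.1 h
  simp only [mem_filter, mem_range] at hx hy
  rcases hxy.lt_or_gt with hlt | hlt
  · exact ⟨x, y, hlt, hy.1, hx.2, hy.2⟩
  · exact ⟨y, x, hlt, hx.1, hy.2, hx.2⟩

/-- Pumping: the loop between two visits to `(s, a)`, shortened to at most `|S|` steps and reached
by a shortened prefix, is repeated until time `H`. -/
theorem exists_trajectory_many_visits [Fintype S] [DecidableEq S] [DecidableEq A]
    (hP0 : ∀ s a s', 0 ≤ P s a s') {f : ℕ → S} (hpos : 0 < trajP μ P π H f) {s : S} {a : A}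
    (hvis : 1 < nVisits π H (s, a) f) :
    ∃ (π' : ℕ → S → A) (T : Fin (H + 1) → S) (V : Finset (Fin H)),
      0 < trajP μ P π' H (extT H T) ∧ (∀ j ∈ V, extT H T j = s ∧ π' j s = a) ∧ V.Nonempty ∧
        H ≤ 2 * Fintype.card S * #V := by
  obtain ⟨h₁, h₂, h12, h2H, hv₁, hv₂⟩ := exists_lt_of_one_lt_nVisits hvis
  obtain ⟨p, L, ρ, hp, hpS, hL, hLS, hρ0, hρlt, hρv, hρ⟩ :=
    exists_periodic_shortcut h12 ((congrArg Prod.fst hv₁).trans (congrArg Prod.fst hv₂).symm)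
  obtain ⟨V, hVρ, hHV⟩ := exists_progression_finset (show p < H by omega) hL
  have hV : V.Nonempty := card_pos.1 (Nat.pos_of_ne_zero fun h0 => by simp [h0] at hHV; omega)
  refine ⟨fun t _ => π (ρ t) (f (ρ t)), fun i => (f ∘ ρ) i, V, ?_, fun j hj => ?_, hV, ?_⟩
  · rw [trajP_congr fun n hn => extT_of_le (f ∘ ρ) hn]
    exact trajP_comp_pos hP0 hpos hρ0 (fun t _ => (hρlt t).trans h2H) (hρ H)
  · obtain ⟨m, hm⟩ := hVρ j hj
    rw [extT_of_le (f ∘ ρ) j.isLt.le]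
    simp only [Function.comp, hm, hρv]
    simp only [Prod.mk.injEq] at hv₁
    exact ⟨hv₁.1, hv₁.1 ▸ hv₁.2⟩
  · have := Nat.mul_le_mul_right #V hLS
    have := card_pos.2 hV
    nlinarith

end Trajectory

theorem stmt9_general {S A : Type} [Fintype S] [DecidableEq S] [DecidableEq A]
    (μ : S → ℝ) (P : S → A → S → ℝ) (R : S → A → Measure ℝ)
    [∀ s a, IsProbabilityMeasure (R s a)]
    (H : ℕ)
    (hP0 : ∀ s a s', 0 ≤ P s a s')
    -- bounded total reward assumption: along any trajectory of positive probability induced by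
    -- any policy, the rewards lie in [0,1] and their sum is at most 1, almost surely
    (hBTR : ∀ (π' : ℕ → S → A) (T : Fin (H + 1) → S), 0 < trajP μ P π' H (extT H T) →
      ∀ᵐ rew ∂(Measure.pi fun h : Fin H =>
          R (extT H T (h : ℕ)) (π' (h : ℕ) (extT H T (h : ℕ)))),
        (∀ h : Fin H, rew h ∈ Set.Icc (0 : ℝ) 1) ∧ (∑ h : Fin H, rew h) ≤ 1)
    (s : S) (a : A) (ε : ℝ) (hε : 0 < ε)
    (π : ℕ → S → A)
    -- the policy π visits (s, a) more than once with probability at least ε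
    (hvis : ε ≤ ∑ T : Fin (H + 1) → S,
      if 1 < nVisits π H (s, a) (extT H T) then trajP μ P π H (extT H T) else 0) :
    (∀ᵐ x ∂(R s a), x ≤ 2 * (Fintype.card S : ℝ) / H) ∧
      ∫ x, x ^ 2 ∂(R s a) ≤ 4 * (Fintype.card S : ℝ) ^ 2 / (H : ℝ) ^ 2 := by
  obtain ⟨T₀, -, hT₀⟩ := exists_lt_of_sum_lt <| show ∑ _ : Fin (H + 1) → S, (0 : ℝ) < _ by
    simpa using hε.trans_le hvis
  have hvis₀ : 1 < nVisits π H (s, a) (extT H T₀) := by_contra fun h => by simp [h] at hT₀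
  rw [if_pos hvis₀] at hT₀
  obtain ⟨π', T, V, hpos, hVsa, hV, hHV⟩ := exists_trajectory_many_visits hP0 hT₀ hvis₀
  have hreward : ∀ᵐ x : ℝ ∂(R s a), 0 ≤ x ∧ x ≤ 1 / #V :=
    ae_of_ae_pi_exists hV (fun j hj => by rw [(hVsa j hj).1, (hVsa j hj).2])
      ((hBTR π' T hpos).mono fun rew ⟨hIcc, hsum⟩ => by
        obtain ⟨j, hj, hle⟩ := exists_mem_le_inv_card hV (fun h => (hIcc h).1) hsum
        exact ⟨j, hj, (hIcc j).1, hle⟩)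
  have hH : (0 : ℝ) < H := by exact_mod_cast Fin.pos hV.choose
  have hinv : 1 / (#V : ℝ) ≤ 2 * Fintype.card S / H := by
    rw [div_le_div_iff₀ (by exact_mod_cast card_pos.2 hV) hH]
    exact_mod_cast (one_mul H).trans_le hHV
  have hbound : ∀ᵐ x : ℝ ∂(R s a), 0 ≤ x ∧ x ≤ 2 * Fintype.card S / H :=
    hreward.mono fun x hx => ⟨hx.1, hx.2.trans hinv⟩
  exact ⟨hbound.mono fun x hx => hx.2, (integral_sq_le_sq_of_ae_le hbound).trans_eq (by ring)⟩

theorem stmt9 {S A : Type} [Fintype S] [DecidableEq S] [DecidableEq A]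
    (μ : S → ℝ) (P : S → A → S → ℝ) (R : S → A → Measure ℝ)
    [∀ s a, IsProbabilityMeasure (R s a)]
    (H : ℕ)
    (hμ0 : ∀ s, 0 ≤ μ s) (hμ1 : ∑ s, μ s = 1)
    (hP0 : ∀ s a s', 0 ≤ P s a s') (hP1 : ∀ s a, ∑ s', P s a s' = 1)
    (hH : Fintype.card S ≤ H)
    -- bounded total reward assumption: along any trajectory of positive probability induced by
    -- any policy, the rewards lie in [0,1] and their sum is at most 1, almost surely
    (hBTR : ∀ (π' : ℕ → S → A) (T : Fin (H + 1) → S), 0 < trajP μ P π' H (extT H T) →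
      ∀ᵐ rew ∂(Measure.pi fun h : Fin H =>
          R (extT H T (h : ℕ)) (π' (h : ℕ) (extT H T (h : ℕ)))),
        (∀ h : Fin H, rew h ∈ Set.Icc (0 : ℝ) 1) ∧ (∑ h : Fin H, rew h) ≤ 1)
    (s : S) (a : A) (ε : ℝ) (hε : 0 < ε)
    (π : ℕ → S → A)
    -- the policy π visits (s, a) more than once with probability at least ε
    (hvis : ε ≤ ∑ T : Fin (H + 1) → S,
      if 1 < nVisits π H (s, a) (extT H T) then trajP μ P π H (extT H T) else 0) :
    (∀ᵐ x ∂(R s a), x ≤ 2 * (Fintype.card S : ℝ) / H) ∧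
      ∫ x, x ^ 2 ∂(R s a) ≤ 4 * (Fintype.card S : ℝ) ^ 2 / (H : ℝ) ^ 2 :=
  stmt9_general μ P R H hP0 hBTR s a ε hε π hvis
end

section
/- Let m̄ ≥ 1 and n̄ ≥ n ≥ 1 be positive integers, and let ε ∈ [0, 1/(8n̄)] be a real number. Let p ∈ [1/m̄, 1]^n be a vector with Σ_{i=1}^n p_i ≤ 1, and let δ ∈ ℝ^n be a vector such that |δ_i| ≤ ε·√(p_i/m̄) for each 1 ≤ i ≤ n and |Σ_{i=1}^n δ_i| ≤ ε·n̄/m̄. Then for every real m ∈ [0, m̄] and every Γ ∈ ℝ^n with Γ_i ∈ [−√(p_i·m̄), √(p_i·m̄)] for all i, it holds that (1 − 8n̄ε)·∏_{i=1}^n p_i^{p_i m + Γ_i} ≤ ∏_{i=1}^n (p_i + δ_i)^{p_i m + Γ_i} ≤ (1 + 8n̄ε)·∏_{i=1}^n p_i^{p_i m + Γ_i}. -/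
/-!
Write `p i + δ i = p i * (1 + x i)` with `x i = δ i / p i`. The ratio of the two products is
`exp S` with `S = ∑ e i * log (1 + x i)`, `e i = p i * m + Γ i`. Replacing `log (1 + x i)` by
`x i` costs `O(ε²)` per coordinate, and `e i * x i = m * δ i + Γ i * x i` where
`|Γ i * x i| ≤ ε` because `|x i| ≤ ε / √(p i * mbar)`. So `|S| ≤ m * |∑ δ i| + 3 n ε ≤ 4 nbar ε`,
and `|exp S - 1| ≤ 2 |S|` finishes.
-/

open Finset Real

lemma abs_log_one_add_sub_self_le {x : ℝ} (hx : |x| ≤ 1 / 2) :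
    |log (1 + x) - x| ≤ 2 * x ^ 2 := by
  have h := abs_log_sub_add_sum_range_le (x := -x) (by rw [abs_neg]; linarith) 1
  rw [abs_neg, sub_neg_eq_add] at h
  simp only [range_one, sum_singleton, zero_add, pow_one, Nat.cast_zero, div_one] at h
  calc |log (1 + x) - x| = |-x + log (1 + x)| := by ring_nf
    _ ≤ |x| ^ 2 / (1 - |x|) := h
    _ ≤ 2 * x ^ 2 := by
      rw [div_le_iff₀ (by linarith), sq_abs]
      nlinarith [sq_nonneg x]

lemma abs_div_le_div_sqrt_mul {p M δ ε : ℝ} (hp : 0 < p) (hM : 0 < M)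
    (hδ : |δ| ≤ ε * √(p / M)) : |δ / p| ≤ ε / √(p * M) := by
  have hsqrt : √(p / M) * √(p * M) = p := by
    rw [← sqrt_mul (div_pos hp hM).le, show p / M * (p * M) = p ^ 2 by field_simp,
      sqrt_sq hp.le]
  rw [abs_div, abs_of_pos hp, div_le_div_iff₀ hp (sqrt_pos.2 (mul_pos hp hM))]
  calc |δ| * √(p * M) ≤ ε * √(p / M) * √(p * M) := by gcongr
    _ = ε * p := by rw [mul_assoc, hsqrt]

lemma abs_mul_log_one_add_sub_le {a Γ x s ε : ℝ} (hs : 1 ≤ s) (ha : 0 ≤ a) (has : a ≤ s ^ 2)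
    (hΓ : |Γ| ≤ s) (hx : |x| ≤ ε / s) (hε : ε ≤ 1 / 2) :
    |(a + Γ) * log (1 + x) - a * x| ≤ ε + 4 * ε ^ 2 := by
  have hs0 : 0 < s := by linarith
  have hε0 : 0 ≤ ε := by
    have := (abs_nonneg x).trans hx
    rwa [le_div_iff₀ hs0, zero_mul] at this
  have hlog := abs_log_one_add_sub_self_le ((hx.trans (div_le_self hε0 hs)).trans hε)
  have haΓ : |a + Γ| ≤ 2 * s ^ 2 := by
    have := abs_add_le a Γ
    rw [abs_of_nonneg ha] at this
    nlinarith
  have hx2 : x ^ 2 ≤ (ε / s) ^ 2 := by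
    rw [← sq_abs]; exact pow_le_pow_left₀ (abs_nonneg x) hx 2
  calc |(a + Γ) * log (1 + x) - a * x| = |Γ * x + (a + Γ) * (log (1 + x) - x)| := by ring_nf
    _ ≤ |Γ| * |x| + |a + Γ| * |log (1 + x) - x| := by
      rw [← abs_mul, ← abs_mul]; exact abs_add_le _ _
    _ ≤ s * (ε / s) + 2 * s ^ 2 * (2 * (ε / s) ^ 2) := by gcongr; linarith
    _ = ε + 4 * ε ^ 2 := by field_simp; ring

lemma abs_mul_log_one_add_div_sub_le {p M m δ Γ ε : ℝ} (hp : 0 < p) (hM : 0 < M)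
    (hpM : 1 ≤ p * M) (hm0 : 0 ≤ m) (hm : m ≤ M) (hδ : |δ| ≤ ε * √(p / M))
    (hΓ : |Γ| ≤ √(p * M)) (hε : ε ≤ 1 / 2) :
    |(p * m + Γ) * log (1 + δ / p) - m * δ| ≤ ε + 4 * ε ^ 2 := by
  have h := abs_mul_log_one_add_sub_le (a := p * m) (one_le_sqrt.2 hpM) (by positivity)
    (by rw [sq_sqrt (by linarith)]; gcongr) hΓ (abs_div_le_div_sqrt_mul hp hM hδ) hε
  rwa [show p * m * (δ / p) = m * δ by field_simp] at h

lemma rpow_add_eq_rpow_mul_exp {p δ : ℝ} (e : ℝ) (hp : 0 < p) (hx : 0 < 1 + δ / p) :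
    (p + δ) ^ e = p ^ e * exp (e * log (1 + δ / p)) := by
  rw [show p + δ = p * (1 + δ / p) by field_simp, mul_rpow hp.le hx.le, rpow_def_of_pos hx,
    mul_comm (log _)]

lemma prod_rpow_add_eq_prod_rpow_mul_exp {ι : Type*} (s : Finset ι) {p δ : ι → ℝ} (e : ι → ℝ)
    (hp : ∀ i ∈ s, 0 < p i) (hx : ∀ i ∈ s, 0 < 1 + δ i / p i) :
    ∏ i ∈ s, (p i + δ i) ^ e i =
      (∏ i ∈ s, p i ^ e i) * exp (∑ i ∈ s, e i * log (1 + δ i / p i)) := by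
  rw [exp_sum, ← prod_mul_distrib]
  exact prod_congr rfl fun i hi => rpow_add_eq_rpow_mul_exp _ (hp i hi) (hx i hi)

lemma mul_exp_mem_Icc_of_two_mul_abs_le {A S c : ℝ} (hA : 0 ≤ A) (hS : 2 * |S| ≤ c)
    (hc : c ≤ 2) : A * exp S ∈ Set.Icc ((1 - c) * A) ((1 + c) * A) := by
  have h := abs_le.1 ((abs_exp_sub_one_le (by linarith)).trans hS)
  constructor <;> nlinarith

theorem stmt10_general (mbar n nbar : ℕ) (hmbar : 1 ≤ mbar) (hn : 1 ≤ n) (hnn : n ≤ nbar)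
    (ε : ℝ) (hε0 : 0 ≤ ε) (hε1 : ε ≤ 1 / (8 * nbar))
    (p : Fin n → ℝ) (hp : ∀ i, p i ∈ Set.Icc (1 / (mbar : ℝ)) 1)
    (δ : Fin n → ℝ)
    (hδ : ∀ i, |δ i| ≤ ε * Real.sqrt (p i / mbar))
    (hδsum : |∑ i, δ i| ≤ ε * nbar / mbar)
    (m : ℝ) (hm0 : 0 ≤ m) (hm1 : m ≤ mbar)
    (Γ : Fin n → ℝ)
    (hΓ : ∀ i, Γ i ∈ Set.Icc (-Real.sqrt (p i * mbar)) (Real.sqrt (p i * mbar))) :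
    (1 - 8 * nbar * ε) * ∏ i, p i ^ (p i * m + Γ i) ≤
        (∏ i, (p i + δ i) ^ (p i * m + Γ i)) ∧
      (∏ i, (p i + δ i) ^ (p i * m + Γ i)) ≤
        (1 + 8 * nbar * ε) * ∏ i, p i ^ (p i * m + Γ i) := by
  have hM : (0 : ℝ) < mbar := by exact_mod_cast hmbar
  have hnbar : (n : ℝ) ≤ nbar := by exact_mod_cast hnn
  have hnbar1 : (1 : ℝ) ≤ nbar := by exact_mod_cast hn.trans hnn
  have hε : 8 * nbar * ε ≤ 1 := by rwa [le_div_iff₀ (by positivity), mul_comm] at hε1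
  have hε2 : ε ≤ 1 / 2 := by nlinarith
  have hp0 (i : Fin n) : 0 < p i := (one_div_pos.2 hM).trans_le (hp i).1
  have hpM (i : Fin n) : 1 ≤ p i * mbar := by
    have := (hp i).1; rwa [div_le_iff₀ hM] at this
  have hr (i : Fin n) : |(p i * m + Γ i) * log (1 + δ i / p i) - m * δ i| ≤ ε + 4 * ε ^ 2 :=
    abs_mul_log_one_add_div_sub_le (hp0 i) hM (hpM i) hm0 hm1 (hδ i) (abs_le.2 (hΓ i)) hε2
  rw [prod_rpow_add_eq_prod_rpow_mul_exp _ _ (fun i _ => hp0 i) fun i _ => ?_]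
  · set S := ∑ i, (p i * m + Γ i) * log (1 + δ i / p i)
    have hmδ : |m * ∑ i, δ i| ≤ nbar * ε := by
      rw [abs_mul, abs_of_nonneg hm0]
      calc m * |∑ i, δ i| ≤ mbar * (ε * nbar / mbar) := by gcongr
        _ = nbar * ε := by field_simp
    have hSmδ : |S - m * ∑ i, δ i| ≤ n * (ε + 4 * ε ^ 2) := by
      rw [mul_sum, ← sum_sub_distrib]
      refine (abs_sum_le_sum_abs _ _).trans ((sum_le_sum fun i _ => hr i).trans ?_)
      rw [sum_const, card_univ, Fintype.card_fin, nsmul_eq_mul]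
    have hS : |S| ≤ 4 * nbar * ε := by
      have := abs_sub_abs_le_abs_sub S (m * ∑ i, δ i)
      nlinarith [mul_le_mul_of_nonneg_right hnbar (by positivity : 0 ≤ ε + 4 * ε ^ 2),
        mul_le_mul_of_nonneg_left hε2 (by positivity : (0 : ℝ) ≤ nbar * ε)]
    exact mul_exp_mem_Icc_of_two_mul_abs_le (prod_nonneg fun i _ => by have := hp0 i; positivity)
      (by linarith) (by linarith)
  · have := abs_le.1 ((abs_div_le_div_sqrt_mul (hp0 i) hM (hδ i)).trans
      (div_le_self hε0 (one_le_sqrt.2 (hpM i))))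
    linarith

theorem stmt10 (mbar n nbar : ℕ) (hmbar : 1 ≤ mbar) (hn : 1 ≤ n) (hnn : n ≤ nbar)
    (ε : ℝ) (hε0 : 0 ≤ ε) (hε1 : ε ≤ 1 / (8 * nbar))
    (p : Fin n → ℝ) (hp : ∀ i, p i ∈ Set.Icc (1 / (mbar : ℝ)) 1)
    (hpsum : ∑ i, p i ≤ 1)
    (δ : Fin n → ℝ)
    (hδ : ∀ i, |δ i| ≤ ε * Real.sqrt (p i / mbar))
    (hδsum : |∑ i, δ i| ≤ ε * nbar / mbar)
    (m : ℝ) (hm0 : 0 ≤ m) (hm1 : m ≤ mbar)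
    (Γ : Fin n → ℝ)
    (hΓ : ∀ i, Γ i ∈ Set.Icc (-Real.sqrt (p i * mbar)) (Real.sqrt (p i * mbar))) :
    (1 - 8 * nbar * ε) * ∏ i, p i ^ (p i * m + Γ i) ≤
        (∏ i, (p i + δ i) ^ (p i * m + Γ i)) ∧
      (∏ i, (p i + δ i) ^ (p i * m + Γ i)) ≤
        (1 + 8 * nbar * ε) * ∏ i, p i ^ (p i * m + Γ i) :=
  stmt10_general mbar n nbar hmbar hn hnn ε hε0 hε1 p hp δ hδ hδsum m hm0 hm1 Γ hΓ
end

section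
/- Let M = (S, A, P, R, H, μ) be a finite MDP and π a (possibly non-stationary) deterministic policy, and let T = ((s_0, a_0, r_0), …, (s_{H−1}, a_{H−1}, r_{H−1}), s_H) be a random trajectory obtained by executing π in M. Then for any (s, a, s′) ∈ S × A × S and any δ ∈ (0,1], with probability at least 1 − δ, Σ_{h=0}^{H−1} 1[(s_h, a_h, s_{h+1}) = (s, a, s′)] ≤ ((2·Q_{δ/2}(Σ_{h=0}^{H−1} 1[(s_h, a_h) = (s, a)]) + 4)/δ) · P(s′ | s, a). -/
open Finset

/-- Number of times the state-action-state triple `z` is visited during the first `K` steps. -/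
def nVisits3 {S A : Type} [DecidableEq S] [DecidableEq A] (π : ℕ → S → A) (K : ℕ)
    (z : S × A × S) (f : ℕ → S) : ℕ :=
  ∑ h ∈ Finset.range K, if (f h, π h (f h), f (h + 1)) = z then 1 else 0

/-!
Let `N` count the visits to `(s, a)`, let `Q` be its `δ/2`-quantile and `m = ⌊Q⌋`. Outside an
event of probability `< δ/2` we have `N ≤ m`, and then every `(s, a, s')` transition is made from
one of the first `m` visits to `(s, a)`. Whether time `h` is such an early visit depends only on
the history up to `h`, so by the Markov property it is followed by `s'` with probability
`P(s' | s, a)`; since there are at most `m` early visits, the number of transitions to `s'` made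
from them has expectation at most `m · P(s' | s, a)`. Markov's inequality bounds the probability
that this count exceeds `(2Q + 4)/δ · P(s' | s, a)` by `δ/2`.
-/

section TrajectoryLaw

variable {S A : Type} (μ : S → ℝ) (P : S → A → S → ℝ) (π : ℕ → S → A)

lemma extT_snoc_eqOn (K : ℕ) (T : Fin (K + 1) → S) (x : S) :
    Set.EqOn (extT (K + 1) (Fin.snoc T x)) (extT K T) (Set.Iic K) := fun n hn => by
  simp only [extT, min_eq_left (Set.mem_Iic.1 hn), min_eq_left (Nat.le_succ_of_le hn)]
  exact Fin.snoc_castSucc (α := fun _ => S) (i := ⟨n, Nat.lt_succ_of_le hn⟩) ..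

lemma extT_snoc_succ (K : ℕ) (T : Fin (K + 1) → S) (x : S) :
    extT (K + 1) (Fin.snoc T x) (K + 1) = x := by
  simp only [extT, min_self]
  exact Fin.snoc_last (α := fun _ => S) ..

lemma trajP_succ (K : ℕ) (f : ℕ → S) :
    trajP μ P π (K + 1) f = trajP μ P π K f * P (f K) (π K (f K)) (f (K + 1)) := by
  rw [trajP, trajP, prod_range_succ, mul_assoc]

lemma trajP_dependsOn (K : ℕ) : DependsOn (trajP μ P π K) (Set.Iic K) := by
  intro f g hfg
  refine congrArg₂ (· * ·) (congrArg μ (hfg 0 (Nat.zero_le K))) (prod_congr rfl fun h hh => ?_)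
  have hh : h < K := mem_range.1 hh
  rw [hfg h hh.le, hfg (h + 1) hh]

lemma trajP_nonneg (hμ0 : ∀ s, 0 ≤ μ s) (hP0 : ∀ s a s', 0 ≤ P s a s') (H : ℕ) (f : ℕ → S) :
    0 ≤ trajP μ P π H f :=
  mul_nonneg (hμ0 _) (prod_nonneg fun _ _ => hP0 _ _ _)

variable [Fintype S]

noncomputable def trajExp (H : ℕ) (X : (ℕ → S) → ℝ) : ℝ :=
  ∑ T : Fin (H + 1) → S, X (extT H T) * trajP μ P π H (extT H T)

noncomputable def trajProb (H : ℕ) (E : (ℕ → S) → Prop) [DecidablePred E] : ℝ :=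
  ∑ T : Fin (H + 1) → S, if E (extT H T) then trajP μ P π H (extT H T) else 0

lemma sum_extT_succ {M : Type*} [AddCommMonoid M] (K : ℕ) (g : (ℕ → S) → M) :
    ∑ T : Fin (K + 2) → S, g (extT (K + 1) T)
      = ∑ T : Fin (K + 1) → S, ∑ x : S, g (extT (K + 1) (Fin.snoc T x)) := by
  rw [← (Fin.snocEquiv fun _ => S).sum_comp, Fintype.sum_prod_type, sum_comm]
  rfl

lemma trajExp_succ_of_dependsOn (hP1 : ∀ s a, ∑ s', P s a s' = 1) {K : ℕ}
    {X : (ℕ → S) → ℝ} (hX : DependsOn X (Set.Iic K)) :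
    trajExp μ P π (K + 1) X = trajExp μ P π K X := by
  rw [trajExp, sum_extT_succ K fun f => X f * trajP μ P π (K + 1) f, trajExp]
  refine sum_congr rfl fun T _ => ?_
  simp_rw [trajP_succ, hX (extT_snoc_eqOn K T _), trajP_dependsOn μ P π K (extT_snoc_eqOn K T _),
    extT_snoc_succ, extT_snoc_eqOn K T _ Set.self_mem_Iic, ← mul_assoc, ← mul_sum, hP1, mul_one]

lemma trajExp_of_dependsOn (hP1 : ∀ s a, ∑ s', P s a s' = 1) {K H : ℕ}
    {X : (ℕ → S) → ℝ} (hX : DependsOn X (Set.Iic K)) (hKH : K ≤ H) :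
    trajExp μ P π H X = trajExp μ P π K X := by
  induction H, hKH using Nat.le_induction with
  | base => rfl
  | succ H hKH ih =>
    rw [trajExp_succ_of_dependsOn μ P π hP1 (hX.mono (Set.Iic_subset_Iic.2 hKH)), ih]

lemma trajExp_const (hμ1 : ∑ s, μ s = 1) (hP1 : ∀ s a, ∑ s', P s a s' = 1) (H : ℕ) (c : ℝ) :
    trajExp μ P π H (fun _ => c) = c := by
  rw [trajExp_of_dependsOn μ P π hP1 (dependsOn_const c |>.mono (Set.empty_subset _))
    (Nat.zero_le H), trajExp, ← (Equiv.funUnique (Fin 1) S).symm.sum_comp]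
  simp [trajP, extT, ← mul_sum, hμ1]

/-- Markov property: given the history up to time `h`, the next state has law
`P (f h) (π h (f h))`. -/
lemma trajExp_ite_succ_eq [DecidableEq S] (hP1 : ∀ s a, ∑ s', P s a s' = 1) {h H : ℕ}
    (hhH : h < H) {X : (ℕ → S) → ℝ} (hX : DependsOn X (Set.Iic h)) (s' : S) :
    trajExp μ P π H (fun f => if f (h + 1) = s' then X f else 0)
      = trajExp μ P π H (fun f => P (f h) (π h (f h)) s' * X f) := by
  have hL : DependsOn (fun f => if f (h + 1) = s' then X f else 0) (Set.Iic (h + 1)) :=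
    fun f g hfg => by
      dsimp only
      rw [hfg (h + 1) Set.self_mem_Iic, hX fun n hn => hfg n (Nat.le_succ_of_le hn)]
  have hR : DependsOn (fun f => P (f h) (π h (f h)) s' * X f) (Set.Iic h) :=
    fun f g hfg => by dsimp only; rw [hfg h Set.self_mem_Iic, hX hfg]
  rw [trajExp_of_dependsOn μ P π hP1 hL hhH,
    trajExp_of_dependsOn μ P π hP1 (hR.mono (Set.Iic_subset_Iic.2 h.le_succ)) hhH,
    trajExp_succ_of_dependsOn μ P π hP1 hR, trajExp,
    sum_extT_succ h fun f => (if f (h + 1) = s' then X f else 0) * trajP μ P π (h + 1) f,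
    trajExp]
  refine sum_congr rfl fun T _ => ?_
  simp_rw [extT_snoc_succ, hX (extT_snoc_eqOn h T _), trajP_succ,
    trajP_dependsOn μ P π h (extT_snoc_eqOn h T _), extT_snoc_succ,
    extT_snoc_eqOn h T _ Set.self_mem_Iic, ite_mul, zero_mul, sum_ite_eq', mem_univ, if_true]
  ring

lemma trajExp_sum {ι : Type*} (s : Finset ι) (H : ℕ) (X : ι → (ℕ → S) → ℝ) :
    trajExp μ P π H (fun f => ∑ i ∈ s, X i f) = ∑ i ∈ s, trajExp μ P π H (X i) := by
  simp only [trajExp, sum_mul]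
  exact sum_comm

lemma trajExp_const_mul (H : ℕ) (c : ℝ) (X : (ℕ → S) → ℝ) :
    trajExp μ P π H (fun f => c * X f) = c * trajExp μ P π H X := by
  simp only [trajExp, mul_sum, mul_assoc]

lemma trajExp_mono (hμ0 : ∀ s, 0 ≤ μ s) (hP0 : ∀ s a s', 0 ≤ P s a s') (H : ℕ)
    {X Y : (ℕ → S) → ℝ} (hXY : ∀ f, X f ≤ Y f) :
    trajExp μ P π H X ≤ trajExp μ P π H Y :=
  sum_le_sum fun _ _ => mul_le_mul_of_nonneg_right (hXY _) (trajP_nonneg μ P π hμ0 hP0 H _)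

lemma trajProb_eq_trajExp (H : ℕ) (E : (ℕ → S) → Prop) [DecidablePred E] :
    trajProb μ P π H E = trajExp μ P π H (fun f => if E f then 1 else 0) := by
  simp only [trajProb, trajExp, boole_mul]

lemma trajProb_add_trajProb_not (hμ1 : ∑ s, μ s = 1) (hP1 : ∀ s a, ∑ s', P s a s' = 1)
    (H : ℕ) (E : (ℕ → S) → Prop) [DecidablePred E] :
    trajProb μ P π H E + trajProb μ P π H (fun f => ¬ E f) = 1 := by
  rw [← trajExp_const μ P π hμ1 hP1 H 1, trajProb, trajProb, ← sum_add_distrib, trajExp]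
  refine sum_congr rfl fun T _ => ?_
  by_cases hE : E (extT H T) <;> simp [hE]

lemma trajProb_le_add (hμ0 : ∀ s, 0 ≤ μ s) (hP0 : ∀ s a s', 0 ≤ P s a s') (H : ℕ)
    {E E₁ E₂ : (ℕ → S) → Prop} [DecidablePred E] [DecidablePred E₁] [DecidablePred E₂]
    (hE : ∀ f, E f → E₁ f ∨ E₂ f) :
    trajProb μ P π H E ≤ trajProb μ P π H E₁ + trajProb μ P π H E₂ := by
  rw [trajProb, trajProb, trajProb, ← sum_add_distrib]
  refine sum_le_sum fun T _ => ?_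
  have := trajP_nonneg μ P π hμ0 hP0 H (extT H T)
  have := hE (extT H T)
  split_ifs <;> simp_all

lemma mul_trajProb_le_trajExp (hμ0 : ∀ s, 0 ≤ μ s) (hP0 : ∀ s a s', 0 ≤ P s a s') (H : ℕ)
    {X : (ℕ → S) → ℝ} (hX : ∀ f, 0 ≤ X f) {E : (ℕ → S) → Prop} [DecidablePred E] {t : ℝ}
    (hE : ∀ f, E f → t ≤ X f) :
    t * trajProb μ P π H E ≤ trajExp μ P π H X := by
  rw [trajProb_eq_trajExp, ← trajExp_const_mul]
  refine trajExp_mono μ P π hμ0 hP0 H fun f => ?_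
  by_cases hf : E f
  · simpa [hf] using hE f hf
  · simpa [hf] using hX f

/-- For `ℕ`-valued `N` the event `N > c p` forces `N ≥ 1`, which also covers `p = 0`. -/
lemma trajProb_not_le_mul_le_of_trajExp_le (hμ0 : ∀ s, 0 ≤ μ s)
    (hP0 : ∀ s a s', 0 ≤ P s a s') (H : ℕ) {N : (ℕ → S) → ℕ} {p c : ℝ} {m : ℕ} (hp : 0 ≤ p)
    (hc : 0 < c)
    (hN : trajExp μ P π H (fun f => (N f : ℝ)) ≤ p * m) :
    trajProb μ P π H (fun f => ¬ (N f : ℝ) ≤ c * p) ≤ m / c := by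
  have hN0 : ∀ f, 0 ≤ (N f : ℝ) := fun f => Nat.cast_nonneg _
  rw [le_div_iff₀ hc]
  rcases hp.eq_or_lt with rfl | hp
  · have hone : ∀ f, ¬ (N f : ℝ) ≤ c * 0 → 1 ≤ (N f : ℝ) := fun f hf => by
      rw [mul_zero, not_le, Nat.cast_pos] at hf
      exact_mod_cast hf
    have := mul_trajProb_le_trajExp μ P π hμ0 hP0 H hN0 hone
    nlinarith [Nat.cast_nonneg (α := ℝ) m]
  · have hcp : ∀ f, ¬ (N f : ℝ) ≤ c * p → c * p ≤ (N f : ℝ) := fun f hf => (not_le.1 hf).le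
    have := mul_trajProb_le_trajExp μ P π hμ0 hP0 H hN0 hcp
    nlinarith

lemma bddAbove_quantNS_set (H : ℕ) {X : (ℕ → S) → ℝ} {B : ℝ} (hXB : ∀ f, X f ≤ B) {d : ℝ}
    (hd : 0 < d) : BddAbove {x : ℝ | d ≤ trajProb μ P π H (fun f => x ≤ X f)} := by
  refine ⟨B, fun x hx => le_of_not_gt fun hBx => ?_⟩
  have hnone : trajProb μ P π H (fun f => x ≤ X f) = 0 :=
    sum_eq_zero fun T _ => if_neg (not_le.2 ((hXB _).trans_lt hBx))
  exact (hx.trans_eq hnone).not_gt hd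

lemma quantNS_nonneg (hμ1 : ∑ s, μ s = 1) (hP1 : ∀ s a, ∑ s', P s a s' = 1) (H : ℕ)
    {X : (ℕ → S) → ℝ} {B : ℝ} (hX0 : ∀ f, 0 ≤ X f) (hXB : ∀ f, X f ≤ B) {d : ℝ}
    (hd0 : 0 < d) (hd1 : d ≤ 1) : 0 ≤ quantNS μ P π H X d := by
  refine le_csSup (bddAbove_quantNS_set μ P π H hXB hd0) ?_
  show d ≤ trajProb μ P π H (fun f => 0 ≤ X f)
  simpa [trajProb_eq_trajExp, hX0, trajExp_const μ P π hμ1 hP1] using hd1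

lemma trajProb_le_lt_of_quantNS_lt (H : ℕ) {X : (ℕ → S) → ℝ} {B : ℝ} (hXB : ∀ f, X f ≤ B)
    {d x : ℝ} (hd : 0 < d) (hx : quantNS μ P π H X d < x) :
    trajProb μ P π H (fun f => x ≤ X f) < d :=
  lt_of_not_ge fun hmem => (le_csSup (bddAbove_quantNS_set μ P π H hXB hd) hmem).not_gt hx

end TrajectoryLaw

section Counting

variable {S A : Type} [DecidableEq S] [DecidableEq A] (π : ℕ → S → A)

lemma nVisits_le_s11 (K : ℕ) (z : S × A) (f : ℕ → S) : nVisits π K z f ≤ K := by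
  simpa [nVisits, sum_boole] using card_filter_le (range K) _

lemma nVisits_mono {K L : ℕ} (hKL : K ≤ L) (z : S × A) (f : ℕ → S) :
    nVisits π K z f ≤ nVisits π L z f :=
  sum_le_sum_of_subset (range_subset_range.2 hKL)

lemma nVisits_dependsOn (K : ℕ) (z : S × A) : DependsOn (nVisits π K z) (Set.Iio K) :=
  fun f g hfg => sum_congr rfl fun h hh => by rw [hfg h (mem_range.1 hh)]

def IsEarlyVisit (m : ℕ) (z : S × A) (h : ℕ) (f : ℕ → S) : Prop :=
  (f h, π h (f h)) = z ∧ nVisits π (h + 1) z f ≤ m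

instance (m : ℕ) (z : S × A) (h : ℕ) : DecidablePred (IsEarlyVisit π m z h) :=
  fun _ => inferInstanceAs (Decidable (_ ∧ _))

lemma isEarlyVisit_dependsOn (m : ℕ) (z : S × A) (h : ℕ) :
    DependsOn (fun f => if IsEarlyVisit π m z h f then (1 : ℝ) else 0) (Set.Iic h) := by
  intro f g hfg
  refine if_congr ?_ rfl rfl
  rw [IsEarlyVisit, IsEarlyVisit, hfg h Set.self_mem_Iic,
    nVisits_dependsOn π (h + 1) z fun n hn => hfg n (Nat.lt_succ_iff.1 hn)]

lemma sum_isEarlyVisit_le_min (m : ℕ) (z : S × A) (f : ℕ → S) (K : ℕ) :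
    ∑ h ∈ range K, (if IsEarlyVisit π m z h f then 1 else 0) ≤ min (nVisits π K z f) m := by
  induction K with
  | zero => simp
  | succ K ih =>
    have hsucc : nVisits π (K + 1) z f
        = nVisits π K z f + if (f K, π K (f K)) = z then 1 else 0 := sum_range_succ _ _
    rw [sum_range_succ, hsucc]
    by_cases hz : (f K, π K (f K)) = z
    · have hearly : IsEarlyVisit π m z K f ↔ nVisits π K z f + 1 ≤ m := by
        simp [IsEarlyVisit, hz, hsucc]
      rw [if_pos hz]
      by_cases he : IsEarlyVisit π m z K f
      · rw [if_pos he]; have := hearly.1 he; omega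
      · rw [if_neg he]; have := mt hearly.2 he; omega
    · rw [if_neg hz, if_neg fun he => hz he.1]
      omega

lemma sum_isEarlyVisit_le (m : ℕ) (z : S × A) (f : ℕ → S) (K : ℕ) :
    ∑ h ∈ range K, (if IsEarlyVisit π m z h f then 1 else 0) ≤ m :=
  (sum_isEarlyVisit_le_min π m z f K).trans (min_le_right _ _)

def nVisits3Trunc (m K : ℕ) (z : S × A) (s' : S) (f : ℕ → S) : ℕ :=
  ∑ h ∈ range K, if f (h + 1) = s' ∧ IsEarlyVisit π m z h f then 1 else 0

lemma nVisits3Trunc_eq {m K : ℕ} {z : S × A} {f : ℕ → S} (hm : nVisits π K z f ≤ m) (s' : S) :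
    nVisits3Trunc π m K z s' f = nVisits3 π K (z.1, z.2, s') f := by
  refine sum_congr rfl fun h hh => if_congr ?_ rfl rfl
  have hearly : nVisits π (h + 1) z f ≤ m :=
    (nVisits_mono π (mem_range.1 hh) z f).trans hm
  simp only [IsEarlyVisit, hearly, and_true, Prod.ext_iff]
  tauto

end Counting

lemma trajExp_nVisits3Trunc_le {S A : Type} [Fintype S] [DecidableEq S] [DecidableEq A]
    (μ : S → ℝ) (P : S → A → S → ℝ) (π : ℕ → S → A) (hμ0 : ∀ s, 0 ≤ μ s)
    (hμ1 : ∑ s, μ s = 1) (hP0 : ∀ s a s', 0 ≤ P s a s') (hP1 : ∀ s a, ∑ s', P s a s' = 1)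
    (m H : ℕ) (z : S × A) (s' : S) :
    trajExp μ P π H (fun f => (nVisits3Trunc π m H z s' f : ℝ)) ≤ P z.1 z.2 s' * m := by
  let early (h : ℕ) (f : ℕ → S) : ℝ := if IsEarlyVisit π m z h f then 1 else 0
  have hcast : ∀ f, (nVisits3Trunc π m H z s' f : ℝ)
      = ∑ h ∈ range H, if f (h + 1) = s' then early h f else 0 := fun f => by
    simp [nVisits3Trunc, early, ite_and]
  have hnext : ∀ h f, P (f h) (π h (f h)) s' * early h f = P z.1 z.2 s' * early h f := by
    intro h f
    by_cases he : IsEarlyVisit π m z h f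
    · rw [← he.1]
    · show _ * ite _ _ _ = _ * ite _ _ _
      rw [if_neg he, mul_zero, mul_zero]
  calc trajExp μ P π H (fun f => (nVisits3Trunc π m H z s' f : ℝ))
      = ∑ h ∈ range H, trajExp μ P π H (fun f => if f (h + 1) = s' then early h f else 0) := by
        simp_rw [hcast]; exact trajExp_sum μ P π _ H _
    _ = ∑ h ∈ range H, trajExp μ P π H (fun f => P z.1 z.2 s' * early h f) := by
        refine sum_congr rfl fun h hh => ?_
        rw [trajExp_ite_succ_eq μ P π hP1 (mem_range.1 hh) (isEarlyVisit_dependsOn π m z h)]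
        exact congrArg _ (funext (hnext h))
    _ = P z.1 z.2 s' * trajExp μ P π H (fun f => ∑ h ∈ range H, early h f) := by
        rw [trajExp_sum, mul_sum]
        exact sum_congr rfl fun h _ => trajExp_const_mul μ P π H _ _
    _ ≤ P z.1 z.2 s' * trajExp μ P π H (fun _ => (m : ℝ)) := by
        refine mul_le_mul_of_nonneg_left (trajExp_mono μ P π hμ0 hP0 H fun f => ?_) (hP0 _ _ _)
        simp only [early]
        exact_mod_cast sum_isEarlyVisit_le π m z f H
    _ = P z.1 z.2 s' * m := by rw [trajExp_const μ P π hμ1 hP1]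

lemma trajProb_not_nVisits3Trunc_le {S A : Type} [Fintype S] [DecidableEq S] [DecidableEq A]
    (μ : S → ℝ) (P : S → A → S → ℝ) (π : ℕ → S → A) (hμ0 : ∀ s, 0 ≤ μ s)
    (hμ1 : ∑ s, μ s = 1) (hP0 : ∀ s a s', 0 ≤ P s a s') (hP1 : ∀ s a, ∑ s', P s a s' = 1)
    (m H : ℕ) (s : S) (a : A) (s' : S) {c : ℝ} (hc : 0 < c) :
    trajProb μ P π H (fun f => ¬ (nVisits3Trunc π m H (s, a) s' f : ℝ) ≤ c * P s a s') ≤ m / c :=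
  trajProb_not_le_mul_le_of_trajExp_le μ P π hμ0 hP0 H (hP0 s a s') hc
    (trajExp_nVisits3Trunc_le μ P π hμ0 hμ1 hP0 hP1 m H (s, a) s')

lemma trajProb_not_nVisits3_le_le {S A : Type} [Fintype S] [DecidableEq S] [DecidableEq A]
    (μ : S → ℝ) (P : S → A → S → ℝ) (π : ℕ → S → A) (hμ0 : ∀ s, 0 ≤ μ s)
    (hP0 : ∀ s a s', 0 ≤ P s a s') (m H : ℕ) (s : S) (a : A) (s' : S) (t : ℝ) :
    trajProb μ P π H (fun f => ¬ (nVisits3 π H (s, a, s') f : ℝ) ≤ t)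
      ≤ trajProb μ P π H (fun f => (m : ℝ) + 1 ≤ nVisits π H (s, a) f)
        + trajProb μ P π H (fun f => ¬ (nVisits3Trunc π m H (s, a) s' f : ℝ) ≤ t) := by
  refine trajProb_le_add μ P π hμ0 hP0 H fun f hf => ?_
  by_cases hN : nVisits π H (s, a) f ≤ m
  · exact Or.inr (nVisits3Trunc_eq π hN s' ▸ hf)
  · exact Or.inl (by exact_mod_cast Nat.succ_le_of_lt (not_le.1 hN))

theorem stmt11 {S A : Type} [Fintype S] [DecidableEq S] [DecidableEq A]
    (μ : S → ℝ) (P : S → A → S → ℝ) (H : ℕ)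
    (hμ0 : ∀ s, 0 ≤ μ s) (hμ1 : ∑ s, μ s = 1)
    (hP0 : ∀ s a s', 0 ≤ P s a s') (hP1 : ∀ s a, ∑ s', P s a s' = 1)
    (π : ℕ → S → A) (s : S) (a : A) (s' : S)
    (δ : ℝ) (hδ0 : 0 < δ) (hδ1 : δ ≤ 1) :
    1 - δ ≤ ∑ T : Fin (H + 1) → S,
      if (nVisits3 π H (s, a, s') (extT H T) : ℝ) ≤
          (2 * quantNS μ P π H (fun g => (nVisits π H (s, a) g : ℝ)) (δ / 2) + 4) / δ *
            P s a s' then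
        trajP μ P π H (extT H T)
      else 0 := by
  set Q := quantNS μ P π H (fun g => (nVisits π H (s, a) g : ℝ)) (δ / 2)
  set c := (2 * Q + 4) / δ
  have hNH : ∀ f, (nVisits π H (s, a) f : ℝ) ≤ H := fun f => by
    exact_mod_cast nVisits_le_s11 π H (s, a) f
  have hQ : 0 ≤ Q := quantNS_nonneg μ P π hμ1 hP1 H (fun f => Nat.cast_nonneg _) hNH
    (half_pos hδ0) (by linarith)
  have hc : 0 < c := by positivity
  have htail : trajProb μ P π H (fun f => (⌊Q⌋₊ : ℝ) + 1 ≤ nVisits π H (s, a) f) < δ / 2 :=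
    trajProb_le_lt_of_quantNS_lt μ P π H hNH (half_pos hδ0) (Nat.lt_floor_add_one Q)
  have htrunc : trajProb μ P π H
      (fun f => ¬ (nVisits3Trunc π ⌊Q⌋₊ H (s, a) s' f : ℝ) ≤ c * P s a s') ≤ δ / 2 := by
    refine (trajProb_not_nVisits3Trunc_le μ P π hμ0 hμ1 hP0 hP1 _ H s a s' hc).trans ?_
    rw [div_le_iff₀ hc, div_mul_div_comm, le_div_iff₀ (by positivity)]
    nlinarith [Nat.floor_le hQ]
  have hbad := trajProb_not_nVisits3_le_le μ P π hμ0 hP0 ⌊Q⌋₊ H s a s' (c * P s a s')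
  have htotal := trajProb_add_trajProb_not μ P π hμ1 hP1 H
    fun f => (nVisits3 π H (s, a, s') f : ℝ) ≤ c * P s a s'
  change 1 - δ ≤ trajProb μ P π H fun f => (nVisits3 π H (s, a, s') f : ℝ) ≤ c * P s a s'
  linarith
end
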